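/- arXiv:2409.15853 — 5 statements merged into one kernel-verified Lean document; each statement's English description precedes it below -/
import Mathlib

section
/- If G is a chordal finite simple graph, then G admits a perfect elimination order. -/
/-- `G` is chordal: it has no induced cycle of length greater than three. -/
def SimpleGraph.IsChordalGraph {V : Type*} (G : SimpleGraph V) : Prop :=
  ∀ m : ℕ, 4 ≤ m → ¬ ∃ c : ZMod m → V, Function.Injective c ∧
    ∀ i j : ZMod m, G.Adj (c i) (c j) ↔ (j = i + 1 ∨ i = j + 1)

namespace DiracPEO

open SimpleGraph Walk Function

variable {V : Type} {G : SimpleGraph V}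

/-- Take the first `n` darts of a walk. -/
def tk {x y : V} : (w : G.Walk x y) → (n : ℕ) → G.Walk x (w.getVert n)
  | w, 0 => Walk.nil.copy rfl (w.getVert_zero).symm
  | Walk.nil, _ + 1 => Walk.nil
  | Walk.cons h q, n + 1 => Walk.cons h (tk q n)

/-- Drop the first `n` darts of a walk. -/
def dp {x y : V} : (w : G.Walk x y) → (n : ℕ) → G.Walk (w.getVert n) y
  | w, 0 => w.copy (w.getVert_zero).symm rfl
  | Walk.nil, _ + 1 => Walk.nil
  | Walk.cons _ q, n + 1 => dp q n

lemma length_tk {x y : V} : ∀ (w : G.Walk x y) (n : ℕ), (tk w n).length = min n w.length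
  | _, 0 => by simp [tk]
  | Walk.nil, n + 1 => by simp [tk]
  | Walk.cons h q, n + 1 => by
      simp [tk, length_tk q n, Nat.succ_min_succ]

lemma length_dp {x y : V} : ∀ (w : G.Walk x y) (n : ℕ), (dp w n).length = w.length - n
  | _, 0 => by simp [dp]
  | Walk.nil, n + 1 => by simp [dp]
  | Walk.cons h q, n + 1 => by
      simp [dp, length_dp q n]

lemma support_tk {x y : V} : ∀ (w : G.Walk x y) (n : ℕ), ∀ v ∈ (tk w n).support, v ∈ w.support
  | w, 0 => by simp [tk]
  | Walk.nil, n + 1 => by simp [tk]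
  | Walk.cons h q, n + 1 => by
      intro v hv
      simp only [tk, support_cons, List.mem_cons] at hv ⊢
      cases hv with
      | head => exact Or.inl rfl
      | tail _ hv => exact Or.inr (support_tk q n v hv)

lemma support_dp {x y : V} : ∀ (w : G.Walk x y) (n : ℕ), ∀ v ∈ (dp w n).support, v ∈ w.support
  | w, 0 => by simp [dp]
  | Walk.nil, n + 1 => by simp [dp, Walk.getVert]
  | Walk.cons _ q, n + 1 => by
      intro v hv
      simp only [dp] at hv
      simp only [support_cons, List.mem_cons]
      exact Or.inr (support_dp q n v hv)

lemma getVert_mem_support {x y : V} (w : G.Walk x y) (n : ℕ) : w.getVert n ∈ w.support := by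
  induction w generalizing n with
  | nil => simp [Walk.getVert]
  | cons h q ih =>
    cases n with
    | zero => simp
    | succ n => simpa using Or.inr (ih n)

lemma IsPath.getVert_inj {x y : V} {w : G.Walk x y} (hw : w.IsPath) :
    ∀ i ≤ w.length, ∀ j ≤ w.length, w.getVert i = w.getVert j → i = j := by
  induction w with
  | nil => intro i hi j hj _; simp only [Walk.length_nil, Nat.le_zero] at hi hj; omega
  | cons h q ih =>
    intro i hi j hj heq
    rw [Walk.isPath_def, support_cons, List.nodup_cons] at hw
    cases i with
    | zero =>
      cases j with
      | zero => rfl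
      | succ j =>
        exfalso
        simp only [Walk.getVert_zero, Walk.getVert_cons_succ] at heq
        exact hw.1 (heq ▸ getVert_mem_support q j)
    | succ i =>
      cases j with
      | zero =>
        exfalso
        simp only [Walk.getVert_zero, Walk.getVert_cons_succ] at heq
        exact hw.1 (heq ▸ getVert_mem_support q i)
      | succ j =>
        simp only [Walk.getVert_cons_succ] at heq
        have := ih ((Walk.isPath_def _).mpr hw.2) i (by simpa using hi) j (by simpa using hj) heq
        omega

lemma splice {x y : V} (w : G.Walk x y) {i j : ℕ} (h1 : i + 1 < j) (h2 : j ≤ w.length)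
    (hadj : G.Adj (w.getVert i) (w.getVert j)) :
    ∃ w' : G.Walk x y, w'.length < w.length ∧ ∀ v ∈ w'.support, v ∈ w.support := by
  refine ⟨(tk w i).append (Walk.cons hadj (dp w j)), ?_, ?_⟩
  · rw [Walk.length_append, Walk.length_cons, length_tk, length_dp]
    omega
  · intro v hv
    rw [Walk.mem_support_append_iff] at hv
    rcases hv with hv | hv
    · exact support_tk w i v hv
    · simp only [support_cons, List.mem_cons] at hv
      rcases hv with rfl | hv
      · exact getVert_mem_support w i
      · exact support_dp w j v hv

/-- Vertices reachable from `a` by a walk avoiding `S`. -/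
def Avoid (G : SimpleGraph V) (a : V) (S : Set V) : Set V :=
  {x | ∃ w : G.Walk a x, ∀ v ∈ w.support, v ∉ S}

lemma mem_avoid_self {a : V} {S : Set V} (ha : a ∉ S) : a ∈ Avoid G a S :=
  ⟨Walk.nil, by simp [ha]⟩

lemma avoid_not_mem {a x : V} {S : Set V} (hx : x ∈ Avoid G a S) : x ∉ S := by
  obtain ⟨w, hw⟩ := hx
  exact hw x w.end_mem_support

lemma support_subset_avoid [DecidableEq V] {a x : V} {S : Set V} {w : G.Walk a x}
    (hw : ∀ v ∈ w.support, v ∉ S) : ∀ v ∈ w.support, v ∈ Avoid G a S := fun v hv =>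
  ⟨w.takeUntil v hv, fun z hz => hw z (w.support_takeUntil_subset hv hz)⟩

lemma avoid_connected [DecidableEq V] {a u v : V} {S : Set V} (hu : u ∈ Avoid G a S)
    (hv : v ∈ Avoid G a S) : ∃ w : G.Walk u v, ∀ z ∈ w.support, z ∈ Avoid G a S := by
  obtain ⟨wu, hwu⟩ := hu
  obtain ⟨wv, hwv⟩ := hv
  refine ⟨wu.reverse.append wv, fun z hz => ?_⟩
  rw [Walk.mem_support_append_iff] at hz
  rcases hz with hz | hz
  · rw [Walk.support_reverse, List.mem_reverse] at hz
    exact support_subset_avoid hwu z hz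
  · exact support_subset_avoid hwv z hz

lemma avoid_extend {a u v : V} {S : Set V} (hu : u ∈ Avoid G a S) (hadj : G.Adj u v)
    (hv : v ∉ S) : v ∈ Avoid G a S := by
  obtain ⟨w, hw⟩ := hu
  refine ⟨w.append (Walk.cons hadj Walk.nil), fun z hz => ?_⟩
  rw [Walk.mem_support_append_iff] at hz
  rcases hz with hz | hz
  · exact hw z hz
  · simp only [Walk.support_cons, Walk.support_nil, List.mem_cons, List.mem_singleton] at hz
    rcases hz with rfl | rfl | h
    · exact hw z w.end_mem_support
    · exact hv
    · cases h

/-- `S` separates `a` from `b`. -/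
def Sep (G : SimpleGraph V) (a b : V) (S : Set V) : Prop :=
  a ∉ S ∧ b ∉ S ∧ ∀ w : G.Walk a b, ∃ v ∈ w.support, v ∈ S

lemma Sep.symm {a b : V} {S : Set V} (h : Sep G a b S) : Sep G b a S := by
  refine ⟨h.2.1, h.1, fun w => ?_⟩
  obtain ⟨v, hv, hvS⟩ := h.2.2 w.reverse
  rw [Walk.support_reverse, List.mem_reverse] at hv
  exact ⟨v, hv, hvS⟩

lemma sep_neighborSet {a b : V} (hab : a ≠ b) (hnadj : ¬G.Adj a b) :
    Sep G a b (G.neighborSet a) := by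
  refine ⟨by simp, by simpa using hnadj, fun w => ?_⟩
  have hlen : w.length ≠ 0 := fun h0 => hab (Walk.eq_of_length_eq_zero h0)
  refine ⟨w.getVert 1, getVert_mem_support w 1, ?_⟩
  have := w.adj_getVert_succ (i := 0) (by omega)
  simpa using this

lemma avoid_not_mem_both {a b v : V} {S : Set V} (hS : Sep G a b S)
    (ha : v ∈ Avoid G a S) (hb : v ∈ Avoid G b S) : False := by
  obtain ⟨w1, h1⟩ := ha
  obtain ⟨w2, h2⟩ := hb
  obtain ⟨z, hz, hzS⟩ := hS.2.2 (w1.append w2.reverse)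
  rw [Walk.mem_support_append_iff] at hz
  rcases hz with hz | hz
  · exact h1 z hz hzS
  · rw [Walk.support_reverse, List.mem_reverse] at hz
    exact h2 z hz hzS

lemma avoid_no_adj {a b u v : V} {S : Set V} (hS : Sep G a b S)
    (hu : u ∈ Avoid G a S) (hv : v ∈ Avoid G b S) : ¬G.Adj u v := fun hadj =>
  avoid_not_mem_both hS (avoid_extend hu hadj (avoid_not_mem hv)) hv

lemma sep_erase {a b s : V} {S : Set V} (hS : Sep G a b S) (hs : s ∈ S)
    (hno : ∀ v ∈ Avoid G a S, ¬G.Adj s v) : Sep G a b (S \ {s}) := by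
  refine ⟨fun h => hS.1 h.1, fun h => hS.2.1 h.1, fun w => ?_⟩
  have key : ∀ (x z : V) (w' : G.Walk x z), x ∈ Avoid G a S → z ∉ Avoid G a S →
      ∃ v ∈ w'.support, v ∈ S \ {s} := by
    intro x z w'
    induction w' with
    | nil => intro hx hz; exact absurd hx hz
    | @cons u u' _ h q ih =>
      intro hu hz
      by_cases hu' : u' ∈ S
      · have hne : u' ≠ s := fun e => hno u hu (G.adj_symm (e ▸ h))
        exact ⟨u', by simp, ⟨hu', hne⟩⟩
      · obtain ⟨v0, hv0, hv0'⟩ := ih (avoid_extend hu h hu') hz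
        exact ⟨v0, by simp [hv0], hv0'⟩
  refine key a b w (mem_avoid_self hS.1) (fun hb => ?_)
  obtain ⟨w0, hw0⟩ := hb
  obtain ⟨z, hz, hzS⟩ := hS.2.2 w0
  exact hw0 z hz hzS
lemma clique_of_sep [DecidableEq V] (hch : G.IsChordalGraph) {a b : V} {S : Set V}
    (hS : Sep G a b S)
    (nbrA : ∀ s ∈ S, ∃ v ∈ Avoid G a S, G.Adj s v)
    (nbrB : ∀ s ∈ S, ∃ v ∈ Avoid G b S, G.Adj s v) :
    ∀ s ∈ S, ∀ t ∈ S, s ≠ t → G.Adj s t := by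
  intro s hs t ht hst
  by_contra hnadj
  set A := Avoid G a S with hAdef
  set B := Avoid G b S with hBdef
  -- the class of walks from s to t with interior in A (resp. B)
  have exClass : ∀ (X : Set V), (∀ s' ∈ S, ∃ v ∈ X, G.Adj s' v) →
      (∀ u ∈ X, ∀ v ∈ X, ∃ w : G.Walk u v, ∀ z ∈ w.support, z ∈ X) →
      ∃ w : G.Walk s t, ∀ v ∈ w.support, v = s ∨ v = t ∨ v ∈ X := by
    intro X nbr conn
    obtain ⟨xs, hxs, hadjs⟩ := nbr s hs
    obtain ⟨xt, hxt, hadjt⟩ := nbr t ht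
    obtain ⟨wmid, hwmid⟩ := conn xs hxs xt hxt
    refine ⟨Walk.cons hadjs (wmid.append (Walk.cons (G.adj_symm hadjt) Walk.nil)), ?_⟩
    intro v hv
    simp only [Walk.support_cons, List.mem_cons] at hv
    rcases hv with rfl | hv
    · exact Or.inl rfl
    rw [Walk.mem_support_append_iff] at hv
    rcases hv with hv | hv
    · exact Or.inr (Or.inr (hwmid v hv))
    · simp only [Walk.support_cons, Walk.support_nil, List.mem_cons, List.mem_singleton] at hv
      rcases hv with rfl | rfl | h
      · exact Or.inr (Or.inr (hwmid v wmid.end_mem_support))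
      · exact Or.inr (Or.inl rfl)
      · cases h
  -- minimal walks in each class
  have minClass : ∀ (X : Set V), (∃ w : G.Walk s t, ∀ v ∈ w.support, v = s ∨ v = t ∨ v ∈ X) →
      ∃ p : G.Walk s t, p.IsPath ∧ (∀ v ∈ p.support, v = s ∨ v = t ∨ v ∈ X) ∧
        (∀ w : G.Walk s t, (∀ v ∈ w.support, v = s ∨ v = t ∨ v ∈ X) → p.length ≤ w.length) := by
    intro X hex
    obtain ⟨w0, hw0⟩ := hex
    let Lens := {n : ℕ | ∃ w : G.Walk s t, (∀ v ∈ w.support, v = s ∨ v = t ∨ v ∈ X) ∧ w.length = n}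
    have hne : Lens.Nonempty := ⟨w0.length, w0, hw0, rfl⟩
    obtain ⟨w1, hw1, hlen1⟩ := Nat.sInf_mem hne
    refine ⟨w1.bypass, w1.bypass_isPath, fun v hv => hw1 v (w1.support_bypass_subset hv), ?_⟩
    intro w hw
    calc w1.bypass.length ≤ w1.length := w1.length_bypass_le
    _ = sInf Lens := hlen1
    _ ≤ w.length := Nat.sInf_le ⟨w, hw, rfl⟩
  have connA : ∀ u ∈ A, ∀ v ∈ A, ∃ w : G.Walk u v, ∀ z ∈ w.support, z ∈ A :=
    fun u hu v hv => avoid_connected hu hv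
  have connB : ∀ u ∈ B, ∀ v ∈ B, ∃ w : G.Walk u v, ∀ z ∈ w.support, z ∈ B :=
    fun u hu v hv => avoid_connected hu hv
  obtain ⟨p, hpPath, hpSup, hpMin⟩ := minClass A (exClass A nbrA connA)
  obtain ⟨q, hqPath, hqSup, hqMin⟩ := minClass B (exClass B nbrB connB)
  -- basic facts
  have hsA : s ∉ A := fun h => avoid_not_mem h hs
  have htA : t ∉ A := fun h => avoid_not_mem h ht
  have hsB : s ∉ B := fun h => avoid_not_mem h hs
  have htB : t ∉ B := fun h => avoid_not_mem h ht
  have hABdisj : ∀ v, v ∈ A → v ∈ B → False := fun v h1 h2 => avoid_not_mem_both hS h1 h2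
  have noAB : ∀ u ∈ A, ∀ v ∈ B, ¬G.Adj u v := fun u hu v hv => avoid_no_adj hS hu hv
  set pk := p.length with hpk
  set qk := q.length with hqk
  have hp2 : 2 ≤ pk := by
    rcases Nat.lt_or_ge pk 2 with h | h
    · interval_cases pk
      · exact absurd (Walk.eq_of_length_eq_zero hpk.symm) hst
      · exfalso
        have := p.adj_getVert_succ (i := 0) (by omega)
        rw [Walk.getVert_zero] at this
        have h1 : p.getVert 1 = t := p.getVert_of_length_le (by omega)
        exact hnadj (h1 ▸ this)
    · exact h
  have hq2 : 2 ≤ qk := by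
    rcases Nat.lt_or_ge qk 2 with h | h
    · interval_cases qk
      · exact absurd (Walk.eq_of_length_eq_zero hqk.symm) hst
      · exfalso
        have := q.adj_getVert_succ (i := 0) (by omega)
        rw [Walk.getVert_zero] at this
        have h1 : q.getVert 1 = t := q.getVert_of_length_le (by omega)
        exact hnadj (h1 ▸ this)
    · exact h
  set qr := q.reverse with hqr
  have hqrLen : qr.length = qk := q.length_reverse
  have hqrPath : qr.IsPath := hqPath.reverse
  set m := pk + qk with hm
  set C : G.Walk s s := p.append qr with hC
  have hCl : C.length = m := by rw [hC, Walk.length_append, hqrLen]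
  -- getVert of C
  have gv1 : ∀ k ≤ pk, C.getVert k = p.getVert k := by
    intro k hk
    rw [hC, Walk.getVert_append]
    rcases lt_or_eq_of_le hk with h | rfl
    · rw [if_pos h]
    · rw [if_neg (lt_irrefl _), Nat.sub_self, Walk.getVert_zero, Walk.getVert_length]
  have gv2 : ∀ k, pk ≤ k → C.getVert k = qr.getVert (k - pk) := by
    intro k hk
    rw [hC, Walk.getVert_append, if_neg (by omega)]
  -- injectivity of getVert on paths
  have hpInj : ∀ i ≤ pk, ∀ j ≤ pk, p.getVert i = p.getVert j → i = j :=
    IsPath.getVert_inj hpPath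
  have hqrInj : ∀ i ≤ qk, ∀ j ≤ qk, qr.getVert i = qr.getVert j → i = j := by
    have := IsPath.getVert_inj hqrPath
    rwa [hqrLen] at this
  -- interior membership
  have hIntA : ∀ k, 0 < k → k < pk → p.getVert k ∈ A := by
    intro k h0 h1
    rcases hpSup _ (getVert_mem_support p k) with h | h | h
    · exact absurd (hpInj k (by omega) 0 (by omega) (by rw [h, Walk.getVert_zero])) (by omega)
    · exact absurd (hpInj k (by omega) pk le_rfl (by rw [h, Walk.getVert_length])) (by omega)
    · exact h
  have hqrSup : ∀ v ∈ qr.support, v = s ∨ v = t ∨ v ∈ B := by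
    intro v hv
    rw [hqr, Walk.support_reverse, List.mem_reverse] at hv
    exact hqSup v hv
  have hqrend : qr.getVert qk = s := by
    rw [← hqrLen, Walk.getVert_length]
  have hIntB : ∀ k, 0 < k → k < qk → qr.getVert k ∈ B := by
    intro k h0 h1
    rcases hqrSup _ (getVert_mem_support qr k) with h | h | h
    · exact absurd (hqrInj k (by omega) qk le_rfl (by rw [h, hqrend])) (by omega)
    · exact absurd (hqrInj k (by omega) 0 (by omega) (by rw [h, Walk.getVert_zero])) (by omega)
    · exact h
  -- no chords on minimal walks
  have noChordP : ∀ i j : ℕ, i + 1 < j → j ≤ pk → ¬G.Adj (p.getVert i) (p.getVert j) := by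
    intro i j h1 h2 hadj
    obtain ⟨w', hw1, hw2⟩ := splice p h1 h2 hadj
    exact absurd (hpMin w' (fun v hv => hpSup v (hw2 v hv))) (by omega)
  have noChordQ : ∀ i j : ℕ, i + 1 < j → j ≤ qk → ¬G.Adj (qr.getVert i) (qr.getVert j) := by
    intro i j h1 h2 hadj
    obtain ⟨w', hw1, hw2⟩ := splice qr h1 (by omega) hadj
    have hw'len : w'.reverse.length = w'.length := w'.length_reverse
    have : qk ≤ w'.length := by
      have := hqMin w'.reverse (fun v hv => by
        rw [Walk.support_reverse, List.mem_reverse] at hv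
        have := hw2 v hv
        rw [hqr, Walk.support_reverse, List.mem_reverse] at this
        exact hqSup v this)
      omega
    rw [hqrLen] at hw1
    omega
  -- the cycle
  have hm4 : 4 ≤ m := by omega
  haveI : NeZero m := ⟨by omega⟩
  haveI : Fact (1 < m) := ⟨by omega⟩
  set c : ZMod m → V := fun i => C.getVert i.val with hc
  have vadd : ∀ x : ZMod m, (x + 1).val = (x.val + 1) % m := by
    intro x
    rw [ZMod.val_add, ZMod.val_one]
  -- injectivity
  have injAux : ∀ k k' : ℕ, k ≤ k' → k' < m → C.getVert k = C.getVert k' → k = k' := by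
    intro k k' hle hlt heq
    rcases le_or_gt k' pk with h1 | h1
    · rw [gv1 k (le_trans hle h1), gv1 k' h1] at heq
      exact hpInj k (le_trans hle h1) k' h1 heq
    · rcases le_or_gt pk k with h2 | h2
      · rw [gv2 k h2, gv2 k' (le_of_lt h1)] at heq
        have := hqrInj (k - pk) (by omega) (k' - pk) (by omega) heq
        omega
      · exfalso
        have hB' : C.getVert k' ∈ B := by
          rw [gv2 k' (le_of_lt h1)]
          exact hIntB (k' - pk) (by omega) (by omega)
        rcases Nat.eq_zero_or_pos k with rfl | hk0
        · rw [hC] at heq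
          have h0 : C.getVert 0 = s := Walk.getVert_zero _
          rw [← hC] at heq
          rw [h0] at heq
          exact hsB (heq ▸ hB')
        · have hA' : C.getVert k ∈ A := by
            rw [gv1 k (le_of_lt h2)]
            exact hIntA k hk0 h2
          exact hABdisj _ (heq ▸ hA') hB'
  have hcinj : Function.Injective c := by
    intro i j heq
    have hi := ZMod.val_lt i
    have hj := ZMod.val_lt j
    rcases le_total i.val j.val with h | h
    · exact ZMod.val_injective m (injAux i.val j.val h hj heq)
    · exact ZMod.val_injective m (injAux j.val i.val h hi heq.symm).symm
  -- consecutive adjacency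
  have key : ∀ i : ZMod m, G.Adj (c i) (c (i + 1)) := by
    intro i
    have hiv := ZMod.val_lt i
    have hadj := C.adj_getVert_succ (i := i.val) (by omega)
    rcases Nat.lt_or_ge (i.val + 1) m with h | h
    · have : (i + 1).val = i.val + 1 := by rw [vadd, Nat.mod_eq_of_lt h]
      rw [hc]
      simp only
      rw [this]
      exact hadj
    · have him : i.val = m - 1 := by omega
      have h0 : (i + 1).val = 0 := by
        rw [vadd, him]
        have : m - 1 + 1 = m := by omega
        rw [this, Nat.mod_self]
      rw [hc]
      simp only
      rw [h0, Walk.getVert_zero]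
      have hmC : C.getVert (i.val + 1) = s := by
        rw [him]
        have : m - 1 + 1 = m := by omega
        rw [this, ← hCl, Walk.getVert_length]
      rw [hmC] at hadj
      exact hadj
  -- no chords
  have hnadjN : ∀ k k' : ℕ, k < k' → k' < m → k' ≠ k + 1 → ¬(k = 0 ∧ k' = m - 1) →
      ¬G.Adj (C.getVert k) (C.getVert k') := by
    intro k k' h1 h2 h3 h4 hadj
    rcases le_or_gt k' pk with hA1 | hA1
    · rw [gv1 k (by omega), gv1 k' hA1] at hadj
      exact noChordP k k' (by omega) hA1 hadj
    · rcases le_or_gt pk k with hA2 | hA2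
      · rw [gv2 k hA2, gv2 k' (le_of_lt hA1)] at hadj
        exact noChordQ (k - pk) (k' - pk) (by omega) (by omega) hadj
      · rcases Nat.eq_zero_or_pos k with rfl | hk0
        · have h0 : C.getVert 0 = s := Walk.getVert_zero _
          rw [h0, gv2 k' (le_of_lt hA1)] at hadj
          have : k' - pk + 1 < qk := by omega
          exact noChordQ (k' - pk) qk this le_rfl (by rw [hqrend]; exact G.adj_symm hadj)
        · rw [gv1 k (by omega), gv2 k' (le_of_lt hA1)] at hadj
          exact noAB _ (hIntA k hk0 hA2) _ (hIntB (k' - pk) (by omega) (by omega)) hadj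
  -- the iff
  have hiff : ∀ i j : ZMod m, G.Adj (c i) (c j) ↔ (j = i + 1 ∨ i = j + 1) := by
    intro i j
    constructor
    · intro hadj
      by_contra hcon
      push_neg at hcon
      obtain ⟨hc1, hc2⟩ := hcon
      have hij : i ≠ j := by
        rintro rfl
        exact G.irrefl hadj
      have hiv := ZMod.val_lt i
      have hjv := ZMod.val_lt j
      rcases lt_trichotomy i.val j.val with hlt | heq | hgt
      · refine hnadjN i.val j.val hlt hjv ?_ ?_ hadj
        · intro e
          exact hc1 (ZMod.val_injective m (by rw [vadd, Nat.mod_eq_of_lt (by omega), e])).symm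
        · rintro ⟨e0, e1⟩
          refine hc2 (ZMod.val_injective m ?_)
          rw [vadd, e0, e1]
          have : m - 1 + 1 = m := by omega
          rw [this, Nat.mod_self]
      · exact hij (ZMod.val_injective m heq)
      · refine hnadjN j.val i.val hgt hiv ?_ ?_ (G.adj_symm hadj)
        · intro e
          exact hc2 (ZMod.val_injective m (by rw [vadd, Nat.mod_eq_of_lt (by omega), e])).symm
        · rintro ⟨e0, e1⟩
          refine hc1 (ZMod.val_injective m ?_)
          rw [vadd, e0, e1]
          have : m - 1 + 1 = m := by omega
          rw [this, Nat.mod_self]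
    · rintro (rfl | rfl)
      · exact key i
      · exact G.adj_symm (key j)
  exact hch m hm4 ⟨c, hcinj, hiff⟩
/-- Simplicial vertex. -/
def Simp (G : SimpleGraph V) (v : V) : Prop :=
  ∀ u w, G.Adj v u → G.Adj v w → u ≠ w → G.Adj u w

lemma chordal_comap {W : Type} (f : W → V) (hf : Function.Injective f)
    (h : G.IsChordalGraph) : (G.comap f).IsChordalGraph := by
  rintro m hm ⟨c, hc, hadj⟩
  exact h m hm ⟨f ∘ c, hf.comp hc, fun i j => hadj i j⟩

theorem dichot : ∀ (N : ℕ) (V : Type) (_ : Fintype V) (G : SimpleGraph V),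
    Fintype.card V ≤ N → G.IsChordalGraph →
    (∀ u v : V, u ≠ v → G.Adj u v) ∨
      ∃ u v : V, u ≠ v ∧ ¬G.Adj u v ∧ Simp G u ∧ Simp G v := by
  intro N
  induction N with
  | zero =>
    intro V _ G hcard _
    left
    intro u
    have : IsEmpty V := Fintype.card_eq_zero_iff.mp (le_antisymm hcard (Nat.zero_le _))
    exact this.elim u
  | succ N ih =>
    intro V _ G hcard hch
    classical
    by_cases hcomp : ∀ u v : V, u ≠ v → G.Adj u v
    · exact Or.inl hcomp
    right
    push_neg at hcomp
    obtain ⟨a, b, hab, hnadj⟩ := hcomp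
    have hSepEx : Sep G a b (G.neighborSet a) := sep_neighborSet hab hnadj
    set Lens := {n : ℕ | ∃ S : Set V, Sep G a b S ∧ S.ncard = n} with hLens
    have hne : Lens.Nonempty := ⟨_, _, hSepEx, rfl⟩
    obtain ⟨S, hS, hcardS⟩ := Nat.sInf_mem hne
    have hmin : ∀ S' : Set V, Sep G a b S' → S.ncard ≤ S'.ncard := fun S' h' =>
      hcardS ▸ Nat.sInf_le ⟨S', h', rfl⟩
    have nbr : ∀ x y : V, Sep G x y S → (∀ S' : Set V, Sep G x y S' → S.ncard ≤ S'.ncard) →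
        ∀ s ∈ S, ∃ v ∈ Avoid G x S, G.Adj s v := by
      intro x y hxy hmin' s hs
      by_contra hno
      push_neg at hno
      have h' : Sep G x y (S \ {s}) := sep_erase hxy hs hno
      have h1 := hmin' _ h'
      have h2 : (S \ {s}).ncard < S.ncard :=
        Set.ncard_diff_singleton_lt_of_mem hs (Set.toFinite S)
      omega
    have nbrA : ∀ s ∈ S, ∃ v ∈ Avoid G a S, G.Adj s v := nbr a b hS hmin
    have nbrB : ∀ s ∈ S, ∃ v ∈ Avoid G b S, G.Adj s v :=
      nbr b a hS.symm (fun S' h' => hmin S' h'.symm)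
    have hclq : ∀ s ∈ S, ∀ t ∈ S, s ≠ t → G.Adj s t := clique_of_sep hch hS nbrA nbrB
    have side : ∀ x y : V, Sep G x y S → ∃ u ∈ Avoid G x S, Simp G u := by
      intro x y hxy
      set A := Avoid G x S with hA
      have hxA : x ∈ A := mem_avoid_self hxy.1
      have hyA : y ∉ A ∪ S := by
        rintro (⟨w, hw⟩ | hyS)
        · obtain ⟨z, hz, hzS⟩ := hxy.2.2 w
          exact hw z hz hzS
        · exact hxy.2.1 hyS
      have hclosure : ∀ v ∈ A, ∀ u, G.Adj v u → u ∈ A ∪ S := by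
        intro v hv u hadj
        by_cases hu : u ∈ S
        · exact Or.inr hu
        · exact Or.inl (avoid_extend hv hadj hu)
      have hcV' : Fintype.card ↥(A ∪ S) ≤ N := by
        have h1 := Fintype.card_subtype_lt (p := (· ∈ A ∪ S)) hyA
        simp only [Fintype.card_eq_nat_card] at h1 hcard ⊢
        exact Nat.lt_succ_iff.mp (lt_of_lt_of_le h1 hcard)
      have hch' : (G.comap (Subtype.val : ↥(A ∪ S) → V)).IsChordalGraph :=
        chordal_comap _ Subtype.val_injective hch
      have lift : ∀ (u : V) (hu : u ∈ A),
          Simp (G.comap (Subtype.val : ↥(A ∪ S) → V)) ⟨u, Or.inl hu⟩ → Simp G u := by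
        intro u huA hsimp v w hv hw hvw
        have hv' : v ∈ A ∪ S := hclosure u huA v hv
        have hw' : w ∈ A ∪ S := hclosure u huA w hw
        exact hsimp ⟨v, hv'⟩ ⟨w, hw'⟩ hv hw (fun e => hvw (congrArg Subtype.val e))
      rcases ih ↥(A ∪ S) inferInstance (G.comap Subtype.val) hcV' hch' with
        hcomp' | ⟨u, v, huv, hnuv, hsu, hsv⟩
      · refine ⟨x, hxA, lift x hxA ?_⟩
        intro u w _ _ huw
        exact hcomp' u w huw
      · have hor : u.1 ∈ A ∨ v.1 ∈ A := by
          rcases u.2 with h | h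
          · exact Or.inl h
          rcases v.2 with h' | h'
          · exact Or.inr h'
          exfalso
          exact hnuv (hclq u.1 h v.1 h' (fun e => huv (Subtype.ext e)))
        rcases hor with h | h
        · exact ⟨u.1, h, lift u.1 h hsu⟩
        · exact ⟨v.1, h, lift v.1 h hsv⟩
    obtain ⟨uA, huA, hsimpA⟩ := side a b hS
    obtain ⟨uB, huB, hsimpB⟩ := side b a hS.symm
    refine ⟨uA, uB, ?_, avoid_no_adj hS huA huB, hsimpA, hsimpB⟩
    intro e
    exact avoid_not_mem_both hS huA (e ▸ huB)

theorem exists_simp {V : Type} [Fintype V] [Nonempty V] (G : SimpleGraph V)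
    (hch : G.IsChordalGraph) : ∃ v : V, Simp G v := by
  rcases dichot (Fintype.card V) V inferInstance G le_rfl hch with hcomp | ⟨u, _, _, _, hsu, _⟩
  · obtain ⟨v⟩ := ‹Nonempty V›
    exact ⟨v, fun u w hu hw huw => hcomp u w huw⟩
  · exact ⟨u, hsu⟩

theorem peo_aux : ∀ (n : ℕ) (G : SimpleGraph (Fin n)), G.IsChordalGraph →
    ∃ σ : Equiv.Perm (Fin n), ∀ i j k : Fin n, i < j → i < k → j ≠ k →
      G.Adj (σ i) (σ j) → G.Adj (σ i) (σ k) → G.Adj (σ j) (σ k) := by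
  intro n
  induction n with
  | zero => exact fun G _ => ⟨1, fun i => i.elim0⟩
  | succ n ihn =>
    intro G hch
    obtain ⟨v, hv⟩ := exists_simp G hch
    set f : Fin n → Fin (n + 1) := v.succAbove with hf
    have hfinj : Function.Injective f := Fin.succAbove_right_injective
    obtain ⟨σ', hσ'⟩ := ihn (G.comap f) (chordal_comap f hfinj hch)
    set σ : Equiv.Perm (Fin (n + 1)) :=
      (finSuccEquiv n).trans ((Equiv.optionCongr σ').trans (finSuccEquiv' v).symm) with hσ
    have hσ0 : σ 0 = v := by
      simp [hσ, finSuccEquiv_zero, finSuccEquiv'_symm_none]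
    have hσs : ∀ i : Fin n, σ i.succ = v.succAbove (σ' i) := by
      intro i
      simp [hσ, finSuccEquiv_succ, finSuccEquiv'_symm_some]
    refine ⟨σ, ?_⟩
    intro i j k hij hik hjk hadj1 hadj2
    have hj0 : j ≠ 0 := fun e => by
      rw [e] at hij
      exact absurd hij (by simp [Fin.lt_def])
    have hk0 : k ≠ 0 := fun e => by
      rw [e] at hik
      exact absurd hik (by simp [Fin.lt_def])
    obtain ⟨j', rfl⟩ := Fin.exists_succ_eq.mpr hj0
    obtain ⟨k', rfl⟩ := Fin.exists_succ_eq.mpr hk0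
    rcases eq_or_ne i 0 with rfl | hi0
    · rw [hσ0] at hadj1 hadj2
      rw [hσs] at hadj1 hadj2 ⊢
      exact hv _ _ hadj1 hadj2 (fun e => hjk (by
        have := hfinj e
        exact congrArg Fin.succ (σ'.injective this)))
    · obtain ⟨i', rfl⟩ := Fin.exists_succ_eq.mpr hi0
      rw [hσs] at hadj1 hadj2 ⊢
      have hij' : i' < j' := by rwa [Fin.succ_lt_succ_iff] at hij
      have hik' : i' < k' := by rwa [Fin.succ_lt_succ_iff] at hik
      have hjk' : j' ≠ k' := fun e => hjk (congrArg Fin.succ e)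
      exact hσ' i' j' k' hij' hik' hjk' hadj1 hadj2

end DiracPEO

/-- **Dirac's theorem.** A chordal finite simple graph admits a perfect elimination
order, i.e. an ordering `σ 0 > σ 1 > ... > σ (n-1)` of the vertices such that the
neighbours of `σ i` among the later vertices form a clique. -/
theorem perfectEliminationOrder_of_chordal {n : ℕ} (G : SimpleGraph (Fin n))
    (h : G.IsChordalGraph) :
    ∃ σ : Equiv.Perm (Fin n), ∀ i j k : Fin n, i < j → i < k → j ≠ k →
      G.Adj (σ i) (σ j) → G.Adj (σ i) (σ k) → G.Adj (σ j) (σ k) := by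
  exact DiracPEO.peo_aux n G h
end

section
/- Let I ⊂ S be a quadratic squarefree monomial ideal (an edge ideal I(G) of a graph G) having linear resolution. Write I = x_1·P + J, where P is the ideal generated by the variables x_j with x_1 x_j ∈ I, and J is generated by the minimal generators of I not divisible by x_1. Then J ⊆ P. -/
open MvPolynomial

/-- `I` has a `d`-linear (free) resolution: there is a resolution
`... → S^{r 2} → S^{r 1} → S^{r 0} → I → 0` in which the generators of `S^{r 0}` map to
homogeneous generators of `I` of degree `d` and all matrices have entries which are
homogeneous of degree `1`.  (Its existence is equivalent to all graded Betti numbers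
`β_{i,j}(I)` vanishing for `j ≠ i + d`.) -/
def HasLinearResolution {K : Type*} [Field K] {σ : Type*}
    (I : Ideal (MvPolynomial σ K)) (d : ℕ) : Prop :=
  ∃ (r : ℕ → ℕ) (g : Fin (r 0) → MvPolynomial σ K)
    (M : (i : ℕ) → Fin (r i) → Fin (r (i + 1)) → MvPolynomial σ K),
    (∀ j, (g j).IsHomogeneous d) ∧
    I = Ideal.span (Set.range g) ∧
    (∀ i j k, (M i j k).IsHomogeneous 1) ∧
    (∀ v : Fin (r 0) → MvPolynomial σ K,
      (∑ j, v j * g j) = 0 ↔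
        ∃ w : Fin (r 1) → MvPolynomial σ K, v = fun j => ∑ k, M 0 j k * w k) ∧
    (∀ (i : ℕ) (v : Fin (r (i + 1)) → MvPolynomial σ K),
      ((fun j => ∑ k, M i j k * v k) = fun _ => 0) ↔
        ∃ w : Fin (r (i + 2)) → MvPolynomial σ K, v = fun k => ∑ l, M (i + 1) k l * w l)

/-- `G` has a perfect elimination order given by the natural order of `Fin n`. -/
def SimpleGraph.IsPerfectEliminationOrdered {n : ℕ} (G : SimpleGraph (Fin n)) : Prop :=
  ∀ i j k : Fin n, i < j → i < k → j ≠ k → G.Adj i j → G.Adj i k → G.Adj j k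

/-- Let `I = I(G)` be an edge ideal with linear resolution, the variables being labelled
so that `x_1 > ... > x_n` (i.e. `0 < 1 < ... < n` in `Fin (n+1)`) is a perfect
elimination order of the complement `Gᶜ` (possible by Fröberg's theorem).  Writing
`I = x_1·P + J` where `P` is generated by the variables `x_j` with `x_1 x_j ∈ I` and
`J` by the generators of `I` not divisible by `x_1`, we have `J ⊆ P`. -/
theorem edgeIdeal_J_le_P {K : Type*} [Field K] {n : ℕ} (G : SimpleGraph (Fin (n + 1)))
    (hpeo : Gᶜ.IsPerfectEliminationOrdered)
    (I P J : Ideal (MvPolynomial (Fin (n + 1)) K))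
    (hI : I = Ideal.span {p | ∃ i j : Fin (n + 1), G.Adj i j ∧ p = X i * X j})
    (hlin : HasLinearResolution I 2)
    (hP : P = Ideal.span {p | ∃ j : Fin (n + 1), G.Adj 0 j ∧ p = X j})
    (hJ : J = Ideal.span {p | ∃ i j : Fin (n + 1),
      G.Adj i j ∧ i ≠ 0 ∧ j ≠ 0 ∧ p = X i * X j}) :
    J ≤ P := by
  subst hJ hP
  rw [Ideal.span_le]
  rintro p ⟨i, j, hadj, hi0, hj0, rfl⟩
  have key : G.Adj 0 i ∨ G.Adj 0 j := by
    by_contra h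
    push_neg at h
    have h1 : Gᶜ.Adj 0 i := ⟨Ne.symm hi0, h.1⟩
    have h2 : Gᶜ.Adj 0 j := ⟨Ne.symm hj0, h.2⟩
    have := hpeo 0 i j (Fin.pos_of_ne_zero hi0) (Fin.pos_of_ne_zero hj0)
      hadj.ne h1 h2
    exact this.2 hadj
  rcases key with h | h
  · exact Ideal.mul_mem_right _ _ (Ideal.subset_span ⟨i, h, rfl⟩)
  · exact Ideal.mul_mem_left _ _ (Ideal.subset_span ⟨j, h, rfl⟩)
end

section
/- Let I ⊂ S be a quadratic monomial ideal with linear resolution. Then, after a suitable relabeling of the variables, the following holds: if x_i^2 ∈ I and x_j x_k ∈ I for some j < i and some k, then x_i x_j ∈ I or x_i x_k ∈ I. -/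
open MvPolynomial

noncomputable section PSSAux
variable {K : Type*} [CommRing K] {σ : Type*} [DecidableEq σ]
set_option linter.unusedSectionVars false

def posP (i : σ) (h : MvPolynomial σ K) : MvPolynomial σ K :=
  ∑ t ∈ h.support.filter (fun t => t i ≠ 0), monomial t (coeff t h)

def negP (i : σ) (h : MvPolynomial σ K) : MvPolynomial σ K :=
  ∑ t ∈ h.support.filter (fun t => ¬ t i ≠ 0), monomial t (coeff t h)

lemma posP_add_negP (i : σ) (h : MvPolynomial σ K) : posP i h + negP i h = h := by
  rw [posP, negP, Finset.sum_filter_add_sum_filter_not]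
  exact h.support_sum_monomial_coeff

lemma coeff_posP (i : σ) (h : MvPolynomial σ K) (ν : σ →₀ ℕ) :
    coeff ν (posP i h) = if ν i ≠ 0 then coeff ν h else 0 := by
  rw [posP, coeff_sum]
  simp only [coeff_monomial]
  rw [Finset.sum_ite_eq' (h.support.filter (fun t => t i ≠ 0)) ν (fun t => coeff t h)]
  by_cases hν : ν i ≠ 0 <;> by_cases hc : coeff ν h = 0 <;>
    simp [Finset.mem_filter, mem_support_iff, hν, hc]

lemma coeff_negP (i : σ) (h : MvPolynomial σ K) (ν : σ →₀ ℕ) :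
    coeff ν (negP i h) = if ν i = 0 then coeff ν h else 0 := by
  rw [negP, coeff_sum]
  simp only [coeff_monomial]
  rw [Finset.sum_ite_eq' _ ν (fun t => coeff t h)]
  by_cases hν : ν i = 0 <;> by_cases hc : coeff ν h = 0 <;>
    simp [Finset.mem_filter, mem_support_iff, hν, hc]

lemma pair_le_degree {f : σ →₀ ℕ} {i j : σ} (h : i ≠ j) : f i + f j ≤ f.degree := by
  by_cases hi : f i = 0
  · rw [hi, zero_add]; exact Finsupp.le_degree j f
  by_cases hj : f j = 0
  · rw [hj, add_zero]; exact Finsupp.le_degree i f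
  have hsub : ({i, j} : Finset σ) ⊆ f.support := by
    intro x hx
    rcases Finset.mem_insert.mp hx with rfl | hx
    · exact Finsupp.mem_support_iff.mpr hi
    · rw [Finset.mem_singleton] at hx; subst hx; exact Finsupp.mem_support_iff.mpr hj
  calc f i + f j = ∑ x ∈ ({i, j} : Finset σ), f x := (Finset.sum_pair h).symm
    _ ≤ ∑ x ∈ f.support, f x := Finset.sum_le_sum_of_subset hsub
    _ = f.degree := rfl

lemma triple_le_degree {f : σ →₀ ℕ} {i j k : σ} (hij : i ≠ j) (hik : i ≠ k) (hjk : j ≠ k) :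
    f i + f j + f k ≤ f.degree := by
  have key : f i + f j + f k = ∑ x ∈ ({i, j, k} : Finset σ), f x := by
    rw [Finset.sum_insert (by simp [hij, hik]), Finset.sum_pair hjk, add_assoc]
  rw [key]
  have h2 : ∑ x ∈ ({i, j, k} : Finset σ), f x
      = ∑ x ∈ ({i, j, k} : Finset σ) ∩ f.support, f x := by
    apply (Finset.sum_subset Finset.inter_subset_left ?_).symm
    intro x _ hx
    simp only [Finset.mem_inter, not_and, Finsupp.mem_support_iff, not_not] at hx
    by_cases h : x ∈ ({i, j, k} : Finset σ)
    · exact hx h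
    · simp_all
  rw [h2]
  exact Finset.sum_le_sum_of_subset Finset.inter_subset_right

end PSSAux

section Main
variable {K : Type*} [Field K] {n : ℕ}

private lemma pss_aux (I : Ideal (MvPolynomial (Fin n) K))
    (A : Set (Fin n →₀ ℕ))
    (hIA : I = Ideal.span ((fun a => (monomial a (1 : K) : MvPolynomial (Fin n) K)) '' A))
    (r : ℕ → ℕ) (g : Fin (r 0) → MvPolynomial (Fin n) K)
    (M : (i : ℕ) → Fin (r i) → Fin (r (i + 1)) → MvPolynomial (Fin n) K)
    (hg : ∀ j, (g j).IsHomogeneous 2)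
    (hIg : I = Ideal.span (Set.range g))
    (hM : ∀ i j k, (M i j k).IsHomogeneous 1)
    (hsyz : ∀ v : Fin (r 0) → MvPolynomial (Fin n) K,
      (∑ j, v j * g j) = 0 ↔
        ∃ w : Fin (r 1) → MvPolynomial (Fin n) K, v = fun j => ∑ k, M 0 j k * w k)
    (i j k : Fin n) (hji : j < i)
    (hu : X (R := K) i ^ 2 ∈ I) (hw : X (R := K) j * X k ∈ I)
    (hij : X (R := K) i * X j ∉ I) (hik : X (R := K) i * X k ∉ I) : False := by
  classical
  have hij' : i ≠ j := ne_of_gt hji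
  have hik' : i ≠ k := by rintro rfl; exact hij (by rwa [mul_comm] at hw)
  -- exponent vectors
  set eu : Fin n →₀ ℕ := Finsupp.single i 2 with heu
  set ew : Fin n →₀ ℕ := Finsupp.single j 1 + Finsupp.single k 1 with hew
  set em : Fin n →₀ ℕ := eu + ew with hem
  have hXu : (X (R := K) i ^ 2 : MvPolynomial (Fin n) K) = monomial eu 1 :=
    X_pow_eq_monomial
  have hXw : (X (R := K) j * X k : MvPolynomial (Fin n) K) = monomial ew 1 := by
    rw [X, X, monomial_mul, one_mul]
  -- support of elements of I dominates a generator
  have hsupp : ∀ h : MvPolynomial (Fin n) K, h ∈ I → ∀ t, coeff t h ≠ 0 → ∃ b ∈ A, b ≤ t := by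
    intro h hh t ht
    rw [hIA] at hh
    exact mem_ideal_span_monomial_image.mp hh t (mem_support_iff.mpr ht)
  have hnotIJ : ∀ b ∈ A, ¬ b ≤ Finsupp.single i 1 + Finsupp.single j 1 := by
    intro b hb hle
    apply hij
    rw [hIA]
    have h1 : (X (R := K) i * X j : MvPolynomial (Fin n) K)
        = monomial (Finsupp.single i 1 + Finsupp.single j 1) 1 := by
      rw [X, X, monomial_mul, one_mul]
    rw [h1]
    apply mem_ideal_span_monomial_image.mpr
    intro xi hxi
    rw [support_monomial, if_neg one_ne_zero, Finset.mem_singleton] at hxi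
    exact ⟨b, hb, hxi ▸ hle⟩
  have hnotIK : ∀ b ∈ A, ¬ b ≤ Finsupp.single i 1 + Finsupp.single k 1 := by
    intro b hb hle
    apply hik
    rw [hIA]
    have h1 : (X (R := K) i * X k : MvPolynomial (Fin n) K)
        = monomial (Finsupp.single i 1 + Finsupp.single k 1) 1 := by
      rw [X, X, monomial_mul, one_mul]
    rw [h1]
    apply mem_ideal_span_monomial_image.mpr
    intro xi hxi
    rw [support_monomial, if_neg one_ne_zero, Finset.mem_singleton] at hxi
    exact ⟨b, hb, hxi ▸ hle⟩
  -- coefficients of I = span g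
  rw [hIg] at hu hw
  obtain ⟨p, hp⟩ := (Submodule.mem_span_range_iff_exists_fun (MvPolynomial (Fin n) K)).mp hu
  obtain ⟨q, hq⟩ := (Submodule.mem_span_range_iff_exists_fun (MvPolynomial (Fin n) K)).mp hw
  simp only [smul_eq_mul] at hp hq
  -- the syzygy between X i^2 and X j * X k
  have hv0 : (∑ a, ((X (R := K) j * X k) * p a - (X (R := K) i ^ 2) * q a) * g a) = 0 := by
    have e1 : ∀ a ∈ Finset.univ, ((X (R := K) j * X k) * p a - (X (R := K) i ^ 2) * q a) * g a
        = (X (R := K) j * X k) * (p a * g a) - (X (R := K) i ^ 2) * (q a * g a) :=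
      fun a _ => by ring
    rw [Finset.sum_congr rfl e1, Finset.sum_sub_distrib, ← Finset.mul_sum, ← Finset.mul_sum,
      hp, hq]
    ring
  obtain ⟨s, hs⟩ := (hsyz _).mp hv0
  have hsa : ∀ a, (X (R := K) j * X k) * p a - (X (R := K) i ^ 2) * q a = ∑ c, M 0 a c * s c :=
    fun a => congrFun hs a
  -- columns of M 0 are syzygies
  have hcol : ∀ c, ∑ a, M 0 a c * g a = 0 := by
    intro c
    have := (hsyz (fun a => ∑ l, M 0 a l * (if l = c then (1:MvPolynomial (Fin n) K) else 0))).mpr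
      ⟨fun l => if l = c then 1 else 0, rfl⟩
    have e : ∀ a ∈ Finset.univ,
        (∑ l, M 0 a l * (if l = c then (1:MvPolynomial (Fin n) K) else 0)) * g a
          = M 0 a c * g a := by
      intro a _
      congr 1
      simp [mul_ite]
    rw [Finset.sum_congr rfl e] at this
    exact this
  -- degree facts
  have hdegg : ∀ a t, coeff t (g a) ≠ 0 → t.degree = 2 := by
    intro a t ht; by_contra hne; exact ht ((hg a).coeff_eq_zero hne)
  have hdegM : ∀ a c t, coeff t (M 0 a c) ≠ 0 → t.degree = 1 := by
    intro a c t ht; by_contra hne; exact ht ((hM 0 a c).coeff_eq_zero hne)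
  have hgI : ∀ a, g a ∈ I := fun a => by rw [hIg]; exact Ideal.subset_span ⟨a, rfl⟩
  have hemx : ∀ x, em x = (if i = x then 2 else 0) + ((if j = x then 1 else 0)
      + (if k = x then 1 else 0)) := by
    intro x
    rw [hem, heu, hew, Finsupp.add_apply, Finsupp.add_apply, Finsupp.single_apply,
      Finsupp.single_apply, Finsupp.single_apply]
  -- the key vanishing: all coefficients of ∑ₐ (gₐ)⁺ Mₐc below em vanish
  have hRcoeff : ∀ (c : Fin (r 1)) (ν : Fin n →₀ ℕ), ν ≤ em →
      coeff ν (∑ a, posP i (g a) * M 0 a c) = 0 := by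
    intro c ν hνm
    by_contra hne
    -- negative form of the same sum gives ν i ≤ 1
    have hR : (∑ a, posP i (g a) * M 0 a c) = - ∑ a, negP i (g a) * M 0 a c := by
      have h2 : ∑ a, (posP i (g a) + negP i (g a)) * M 0 a c = 0 := by
        have e : ∀ a ∈ Finset.univ, (posP i (g a) + negP i (g a)) * M 0 a c
            = M 0 a c * g a := fun a _ => by rw [posP_add_negP, mul_comm]
        rw [Finset.sum_congr rfl e]
        exact hcol c
      rw [eq_neg_iff_add_eq_zero, ← Finset.sum_add_distrib]
      simpa [add_mul] using h2
    have hνi : ν i ≤ 1 := by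
      rw [hR] at hne
      have hne' : coeff ν (∑ a, negP i (g a) * M 0 a c) ≠ 0 := by
        simpa using hne
      rw [coeff_sum] at hne'
      obtain ⟨a, -, ha⟩ := Finset.exists_ne_zero_of_sum_ne_zero hne'
      rw [coeff_mul] at ha
      obtain ⟨z, hzmem, hz⟩ := Finset.exists_ne_zero_of_sum_ne_zero ha
      have hz1 : coeff z.1 (negP i (g a)) ≠ 0 := fun h => hz (by rw [h, zero_mul])
      have hz2 : coeff z.2 (M 0 a c) ≠ 0 := fun h => hz (by rw [h, mul_zero])
      have hz1i : z.1 i = 0 := by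
        by_contra h
        rw [coeff_negP, if_neg h] at hz1; exact hz1 rfl
      have hz2d : z.2.degree = 1 := hdegM a c _ hz2
      have hsum : z.1 i + z.2 i = ν i := by
        rw [← Finset.HasAntidiagonal.mem_antidiagonal.mp hzmem]; rfl
      have : z.2 i ≤ 1 := le_trans (Finsupp.le_degree i z.2) (le_of_eq hz2d)
      omega
    -- positive form: find a monomial of some gₐ that is in I and ≤ em with i-coordinate 1
    rw [coeff_sum] at hne
    obtain ⟨a, -, ha⟩ := Finset.exists_ne_zero_of_sum_ne_zero hne
    rw [coeff_mul] at ha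
    obtain ⟨y, hymem, hy⟩ := Finset.exists_ne_zero_of_sum_ne_zero ha
    have hy1 : coeff y.1 (posP i (g a)) ≠ 0 := fun h => hy (by rw [h, zero_mul])
    have hy1i : y.1 i ≠ 0 := by
      by_contra h
      rw [coeff_posP, if_neg (fun hne => hne h)] at hy1
      exact hy1 rfl
    have hy1g : coeff y.1 (g a) ≠ 0 := by
      rw [coeff_posP, if_pos hy1i] at hy1; exact hy1
    have hy1d : y.1.degree = 2 := hdegg a _ hy1g
    have hyle : y.1 ≤ ν := by
      rw [Finsupp.le_def]
      intro x
      have : y.1 x + y.2 x = ν x := by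
        rw [← Finset.HasAntidiagonal.mem_antidiagonal.mp hymem]; rfl
      omega
    have hylem : ∀ x, y.1 x ≤ em x := fun x =>
      le_trans (Finsupp.le_def.mp hyle x) (Finsupp.le_def.mp hνm x)
    have hy1i1 : y.1 i = 1 := by
      have := le_trans (Finsupp.le_def.mp hyle i) hνi
      omega
    obtain ⟨b, hb, hble⟩ := hsupp (g a) (hgI a) y.1 hy1g
    have hcases : y.1 ≤ Finsupp.single i 1 + Finsupp.single j 1
        ∨ y.1 ≤ Finsupp.single i 1 + Finsupp.single k 1 := by
      by_cases hyj : y.1 j = 0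
      · right
        rw [Finsupp.le_def]
        intro x
        rw [Finsupp.add_apply, Finsupp.single_apply, Finsupp.single_apply]
        rcases eq_or_ne x i with rfl | hxi
        · rw [if_pos rfl, if_neg (fun h => hik' h.symm)]
          omega
        rcases eq_or_ne x k with rfl | hxk
        · rw [if_neg (fun h => hxi h.symm), if_pos rfl]
          have h2 : y.1 i + y.1 x ≤ y.1.degree := pair_le_degree (fun h => hxi h.symm)
          omega
        · rw [if_neg (fun h => hxi h.symm), if_neg (fun h => hxk h.symm)]
          rcases eq_or_ne x j with rfl | hxj
          · omega
          · have h0 : em x = 0 := by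
              rw [hemx, if_neg (fun h => hxi h.symm), if_neg (fun h => hxj h.symm),
                if_neg (fun h => hxk h.symm)]
            have := hylem x
            omega
      · left
        rw [Finsupp.le_def]
        intro x
        rw [Finsupp.add_apply, Finsupp.single_apply, Finsupp.single_apply]
        rcases eq_or_ne x i with rfl | hxi
        · rw [if_pos rfl, if_neg (fun h => hij' h.symm)]
          omega
        rcases eq_or_ne x j with rfl | hxj
        · rw [if_neg (fun h => hxi h.symm), if_pos rfl]
          have h2 : y.1 i + y.1 x ≤ y.1.degree := pair_le_degree (fun h => hxi h.symm)
          omega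
        · rw [if_neg (fun h => hxi h.symm), if_neg (fun h => hxj h.symm)]
          rcases eq_or_ne x k with rfl | hxk
          · have h3 : y.1 i + y.1 j + y.1 x ≤ y.1.degree :=
              triple_le_degree hij' (fun h => hxi h.symm) (fun h => hxj h.symm)
            omega
          · have h0 : em x = 0 := by
              rw [hemx, if_neg (fun h => hxi h.symm), if_neg (fun h => hxj h.symm),
                if_neg (fun h => hxk h.symm)]
            have := hylem x
            omega
    rcases hcases with h | h
    · exact hnotIJ b hb (le_trans hble h)
    · exact hnotIK b hb (le_trans hble h)
  -- the master sum
  have hewi : ew i = 0 := by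
    rw [hew, Finsupp.add_apply, Finsupp.single_apply, Finsupp.single_apply,
      if_neg (fun h => hij' h.symm), if_neg (fun h => hik' h.symm)]
    rfl
  -- evaluation via the syzygy matrix: coefficient of em is 0
  have hzero : coeff em (∑ a, posP i (g a)
      * ((X (R := K) j * X k) * p a - (X (R := K) i ^ 2) * q a)) = 0 := by
    have e1 : (∑ a, posP i (g a) * ((X (R := K) j * X k) * p a - (X (R := K) i ^ 2) * q a))
        = ∑ c, s c * ∑ a, posP i (g a) * M 0 a c := by
      have e2 : ∀ a ∈ Finset.univ, posP i (g a)
          * ((X (R := K) j * X k) * p a - (X (R := K) i ^ 2) * q a)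
          = ∑ c, posP i (g a) * (M 0 a c * s c) := by
        intro a _
        rw [hsa a, Finset.mul_sum]
      rw [Finset.sum_congr rfl e2, Finset.sum_comm]
      refine Finset.sum_congr rfl (fun c _ => ?_)
      rw [Finset.mul_sum]
      exact Finset.sum_congr rfl (fun a _ => by ring)
    rw [e1, coeff_sum]
    refine Finset.sum_eq_zero (fun c _ => ?_)
    rw [coeff_mul]
    refine Finset.sum_eq_zero (fun z hz => ?_)
    have hz2 : z.2 ≤ em := by
      rw [Finsupp.le_def]
      intro x
      have : z.1 x + z.2 x = em x := by
        rw [← Finset.HasAntidiagonal.mem_antidiagonal.mp hz]; rfl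
      omega
    rw [hRcoeff c z.2 hz2, mul_zero]
  -- direct evaluation: coefficient of em is 1
  have hone : coeff em (∑ a, posP i (g a)
      * ((X (R := K) j * X k) * p a - (X (R := K) i ^ 2) * q a)) = 1 := by
    have hsplitp : ∑ a, posP i (g a) * p a
        = X (R := K) i ^ 2 - ∑ a, negP i (g a) * p a := by
      rw [eq_sub_iff_add_eq, ← Finset.sum_add_distrib, ← hp]
      refine Finset.sum_congr rfl fun a _ => ?_
      conv_rhs => rw [← posP_add_negP i (g a)]
      ring
    have hsplitq : ∑ a, posP i (g a) * q a
        = X (R := K) j * X k - ∑ a, negP i (g a) * q a := by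
      rw [eq_sub_iff_add_eq, ← Finset.sum_add_distrib, ← hq]
      refine Finset.sum_congr rfl fun a _ => ?_
      conv_rhs => rw [← posP_add_negP i (g a)]
      ring
    have e2 : (∑ a, posP i (g a) * ((X (R := K) j * X k) * p a - (X (R := K) i ^ 2) * q a))
        = (X (R := K) i ^ 2) * (∑ a, negP i (g a) * q a)
          - (X (R := K) j * X k) * (∑ a, negP i (g a) * p a) := by
      have e3 : ∀ a ∈ Finset.univ, posP i (g a)
          * ((X (R := K) j * X k) * p a - (X (R := K) i ^ 2) * q a)
          = (X (R := K) j * X k) * (posP i (g a) * p a)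
            - (X (R := K) i ^ 2) * (posP i (g a) * q a) := fun a _ => by ring
      rw [Finset.sum_congr rfl e3, Finset.sum_sub_distrib, ← Finset.mul_sum, ← Finset.mul_sum,
        hsplitp, hsplitq]
      ring
    rw [e2, coeff_sub]
    have hc1 : coeff em ((X (R := K) i ^ 2) * ∑ a, negP i (g a) * q a) = 1 := by
      rw [hXu, hem, coeff_monomial_mul, one_mul]
      have e4 : (∑ a, negP i (g a) * q a)
          = (X (R := K) j * X k) - ∑ a, posP i (g a) * q a := by
        rw [eq_sub_iff_add_eq, ← Finset.sum_add_distrib, ← hq]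
        refine Finset.sum_congr rfl fun a _ => ?_
        conv_rhs => rw [← posP_add_negP i (g a)]
        ring
      rw [e4, coeff_sub, hXw, coeff_monomial, if_pos rfl]
      have h5 : coeff ew (∑ a, posP i (g a) * q a) = 0 := by
        rw [coeff_sum]
        refine Finset.sum_eq_zero (fun a _ => ?_)
        rw [coeff_mul]
        refine Finset.sum_eq_zero (fun z hz => ?_)
        have hz1i : z.1 i = 0 := by
          have : z.1 i + z.2 i = ew i := by
            rw [← Finset.HasAntidiagonal.mem_antidiagonal.mp hz]; rfl
          omega
        rw [coeff_posP, if_neg (fun h => h hz1i), zero_mul]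
      rw [h5, sub_zero]
    have hc2 : coeff em ((X (R := K) j * X k) * ∑ a, negP i (g a) * p a) = 0 := by
      have hem' : em = ew + eu := by rw [hem, add_comm]
      rw [hXw, hem', coeff_monomial_mul, one_mul, coeff_sum]
      refine Finset.sum_eq_zero (fun a _ => ?_)
      rw [coeff_mul]
      refine Finset.sum_eq_zero (fun z hz => ?_)
      by_cases h0 : coeff z.1 (negP i (g a)) = 0
      · rw [h0, zero_mul]
      exfalso
      have hz1i : z.1 i = 0 := by
        by_contra h
        rw [coeff_negP, if_neg h] at h0
        exact h0 rfl
      have hz1g : coeff z.1 (g a) ≠ 0 := by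
        rw [coeff_negP, if_pos hz1i] at h0
        exact h0
      have hz1d : z.1.degree = 2 := hdegg a _ hz1g
      have hz1z : z.1 = 0 := by
        ext x
        have hle : z.1 x + z.2 x = eu x := by
          rw [← Finset.HasAntidiagonal.mem_antidiagonal.mp hz]; rfl
        rcases eq_or_ne x i with rfl | hxi
        · exact hz1i
        · have : eu x = 0 := by
            rw [heu, Finsupp.single_apply, if_neg (fun h => hxi h.symm)]
          simpa using Nat.le_antisymm (by omega) (Nat.zero_le _)
      rw [hz1z, map_zero] at hz1d
      exact two_ne_zero hz1d.symm
    rw [hc1, hc2, sub_zero]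
  rw [hone] at hzero
  exact one_ne_zero hzero




end Main

/-- **Property (**).** Let `I` be a quadratic monomial ideal with linear resolution.
After a suitable relabelling `σ` of the variables: if `x_i² ∈ I` and `x_j x_k ∈ I`
for some `j < i` and some `k`, then `x_i x_j ∈ I` or `x_i x_k ∈ I`. -/
theorem property_star_star {K : Type*} [Field K] {n : ℕ}
    (I : Ideal (MvPolynomial (Fin n) K))
    (hquad : ∃ A : Set (Fin n →₀ ℕ), (∀ a ∈ A, a.sum (fun _ e => e) = 2) ∧
      I = Ideal.span ((fun a => (monomial a (1 : K) : MvPolynomial (Fin n) K)) '' A))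
    (hlin : HasLinearResolution I 2) :
    ∃ σ : Equiv.Perm (Fin n), ∀ i j k : Fin n, j < i →
      X (σ i) ^ 2 ∈ I → X (σ j) * X (σ k) ∈ I →
      X (σ i) * X (σ j) ∈ I ∨ X (σ i) * X (σ k) ∈ I := by
  obtain ⟨A, -, hIA⟩ := hquad
  obtain ⟨r, g, M, hg, hIg, hM, hsyz, -⟩ := hlin
  refine ⟨1, fun i j k hji hu hw => ?_⟩
  simp only [Equiv.Perm.one_apply] at hu hw ⊢
  by_contra hcon
  push_neg at hcon
  exact pss_aux I A hIA r g M hg hIg hM hsyz i j k hji hu hw hcon.1 hcon.2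
end

section
/- Let I ⊂ S be an equigenerated monomial ideal (all minimal generators of the same degree d) with linear quotients. Then I has a d-linear resolution. -/
/-!
Adjoin the generators one at a time. If `F` is a linear resolution of `J = (u₁, …, u_{k-1})` and
`J : u_k = (x_i : i ∈ s)`, the Koszul complex on these variables resolves `S/(J : u_k)` linearly.
Multiplication by `u_k` lifts to a chain map from it into `F`; lifting degree by degree with
homogeneous components keeps the lifted matrices linear. Its mapping cone is then a linear
resolution of `J + (u_k)`: exactness of the cone in homological degree one is exactly the
injectivity of `u_k : S/(J : u_k) → S/J`. The Koszul complex is itself an iterated cone, of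
multiplication by one variable at a time.
-/

open MvPolynomial

open Matrix

namespace MvPolynomial
variable {σ R : Type*} [CommSemiring R]

attribute [local instance] MvPolynomial.gradedAlgebra in
theorem IsHomogeneous.homogeneousComponent_mul {p : MvPolynomial σ R} {e : ℕ}
    (hp : p.IsHomogeneous e) (c : ℕ) (q : MvPolynomial σ R) :
    homogeneousComponent (e + c) (p * q) = p * homogeneousComponent c q := by
  have h := DirectSum.coe_decompose_mul_of_left_mem_of_le (homogeneousSubmodule σ R) (b := q)
    (n := e + c) hp (Nat.le_add_right e c)
  rw [Nat.add_sub_cancel_left] at h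
  rwa [← decomposition.decompose'_apply, ← decomposition.decompose'_apply]

theorem mem_ideal_span_X_image_of_mul_X_mem {s : Set σ} {x : σ} (hx : x ∉ s)
    {q : MvPolynomial σ R} (h : q * X x ∈ Ideal.span (X '' s)) : q ∈ Ideal.span (X '' s) := by
  rw [mem_ideal_span_X_image] at h ⊢
  intro m hm
  obtain ⟨y, hy, hmy⟩ := h (m + Finsupp.single x 1) <| by
    rw [support_mul_X]
    exact Finset.mem_map_of_mem _ hm
  have hxy : x ≠ y := fun hxy => hx (hxy ▸ hy)
  exact ⟨y, hy, by simpa [Finsupp.single_apply, hxy] using hmy⟩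

end MvPolynomial

namespace Matrix

section Exact
variable {R : Type*} [CommRing R] {l m n o l' m' n' : Type*}

theorem exists_mul_eq_of_forall_mem_range [Fintype m] {A : Matrix l m R} {B : Matrix l n R}
    (h : ∀ c, Bᵀ c ∈ Set.range A.mulVec) : ∃ X : Matrix m n R, A * X = B := by
  choose w hw using h
  exact ⟨(of w)ᵀ, Matrix.ext fun r c => congrFun (hw c) r⟩

theorem submatrix_mulVecLin_comp_funCongrLeft [Fintype n] [Fintype n'] (A : Matrix m n R) (e₁ : m' ≃ m)
    (e₂ : n' ≃ n) :
    (A.submatrix e₁ e₂).mulVecLin ∘ₗ (LinearEquiv.funCongrLeft R R e₂).toLinearMap =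
      (LinearEquiv.funCongrLeft R R e₁).toLinearMap ∘ₗ A.mulVecLin :=
  LinearMap.ext fun v => by
    change A.submatrix e₁ e₂ *ᵥ (v ∘ e₂) = (A *ᵥ v) ∘ e₁
    rw [submatrix_mulVec_equiv, Function.comp_assoc, Equiv.self_comp_symm, Function.comp_id]

variable [Fintype m] [Fintype n]

theorem exists_mul_eq_of_exact {A : Matrix m n R} {A' : Matrix l m R}
    (h : Function.Exact A.mulVec A'.mulVec) {B : Matrix m o R} (hB : A' * B = 0) :
    ∃ X : Matrix n o R, A * X = B :=
  exists_mul_eq_of_forall_mem_range fun c => (h _).1 <| funext fun r => by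
    simpa [mulVec, dotProduct, mul_apply] using congrFun₂ hB r c

theorem mul_eq_zero_of_exact {A : Matrix m n R} {A' : Matrix l m R}
    (h : Function.Exact A.mulVec A'.mulVec) : A' * A = 0 :=
  ext_iff_mulVec.2 fun v => by simpa [← mulVec_mulVec] using h.apply_apply_eq_zero v

theorem exact_mulVec_of_mul_eq_zero {A : Matrix m n R} {A' : Matrix l m R} (hA : A' * A = 0)
    (h : ∀ v, A' *ᵥ v = 0 → v ∈ Set.range A.mulVec) : Function.Exact A.mulVec A'.mulVec :=
  Function.Exact.of_comp_of_mem_range (funext fun v => by simp [mulVec_mulVec, hA]) h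

theorem exact_mulVec_submatrix_iff [Fintype m'] [Fintype n'] {A : Matrix m n R}
    {A' : Matrix l m R} (e₀ : l' ≃ l) (e₁ : m' ≃ m) (e₂ : n' ≃ n) :
    Function.Exact (A.submatrix e₁ e₂).mulVec (A'.submatrix e₀ e₁).mulVec ↔
      Function.Exact A.mulVec A'.mulVec := by
  simpa only [coe_mulVecLin] using Function.Exact.iff_of_ladder_linearEquiv
    (submatrix_mulVecLin_comp_funCongrLeft A e₁ e₂) (submatrix_mulVecLin_comp_funCongrLeft A' e₀ e₁)

end Exact

section Cone
variable {R : Type*} [CommRing R] {l n₀ n₁ n₂ k₀ k₁ : Type*} [Fintype n₁] [Fintype n₂]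
  [Fintype k₀] [Fintype k₁] {f₂ : Matrix n₁ n₂ R} {f₁ : Matrix n₀ n₁ R} {φ₂ : Matrix n₁ k₁ R}
  {φ₁ : Matrix n₀ k₀ R} {κ₁ : Matrix k₀ k₁ R}

theorem sumElim_mem_range_fromBlocks_mulVec (hf : Function.Exact f₂.mulVec f₁.mulVec)
    (hφ : f₁ * φ₂ = φ₁ * κ₁) {a : n₁ → R} {b : k₀ → R} (hab : f₁ *ᵥ a + φ₁ *ᵥ b = 0)
    (hb : b ∈ Set.range κ₁.mulVec) :
    Sum.elim a b ∈ Set.range (fromBlocks f₂ φ₂ 0 (-κ₁)).mulVec := by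
  obtain ⟨c, rfl⟩ := hb
  obtain ⟨x, hx⟩ := (hf (a + φ₂ *ᵥ c)).1 <| by
    rw [mulVec_add, mulVec_mulVec, hφ, ← mulVec_mulVec, hab]
  exact ⟨Sum.elim x (-c), by simp [fromBlocks_mulVec, hx, mulVec_neg, neg_mulVec]⟩

theorem exact_mulVec_fromBlocks_fromCols (hf : Function.Exact f₂.mulVec f₁.mulVec)
    (hφ : f₁ * φ₂ = φ₁ * κ₁)
    (hφ₁ : ∀ b, φ₁ *ᵥ b ∈ Set.range f₁.mulVec → b ∈ Set.range κ₁.mulVec) :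
    Function.Exact (fromBlocks f₂ φ₂ 0 (-κ₁)).mulVec (fromCols f₁ φ₁).mulVec := by
  refine exact_mulVec_of_mul_eq_zero ?_ fun v hv => ?_
  · simp [fromCols_mul_fromBlocks, mul_eq_zero_of_exact hf, hφ]
  rw [← Sum.elim_comp_inl_inr v] at hv ⊢
  rw [fromCols_mulVec_sumElim] at hv
  refine sumElim_mem_range_fromBlocks_mulVec hf hφ hv (hφ₁ _ ⟨-(v ∘ Sum.inl), ?_⟩)
  rw [mulVec_neg, neg_eq_iff_add_eq_zero, hv]

theorem exact_mulVec_fromBlocks_fromBlocks {κ₀ : Matrix l k₀ R}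
    (hf : Function.Exact f₂.mulVec f₁.mulVec) (hκ : Function.Exact κ₁.mulVec κ₀.mulVec)
    (hφ : f₁ * φ₂ = φ₁ * κ₁) :
    Function.Exact (fromBlocks f₂ φ₂ 0 (-κ₁)).mulVec (fromBlocks f₁ φ₁ 0 (-κ₀)).mulVec := by
  refine exact_mulVec_of_mul_eq_zero ?_ fun v hv => ?_
  · simp [fromBlocks_multiply, mul_eq_zero_of_exact hf, mul_eq_zero_of_exact hκ, hφ]
  rw [fromBlocks_mulVec, ← Sum.elim_zero_zero, Sum.elim_eq_iff] at hv
  obtain ⟨hv₁, hv₂⟩ := hv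
  rw [zero_mulVec, zero_add, neg_mulVec, neg_eq_zero] at hv₂
  rw [← Sum.elim_comp_inl_inr v]
  exact sumElim_mem_range_fromBlocks_mulVec hf hφ hv₁ ((hκ _).1 hv₂)

end Cone

section Homogeneous
variable {σ R : Type*} [CommSemiring R] {l m n o : Type*}

def IsHomogeneous (A : Matrix m n (MvPolynomial σ R)) (k : ℕ) : Prop :=
  ∀ i j, (A i j).IsHomogeneous k

theorem IsHomogeneous.mul [Fintype n] {A : Matrix m n (MvPolynomial σ R)}
    {B : Matrix n o (MvPolynomial σ R)} {e f : ℕ} (hA : A.IsHomogeneous e)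
    (hB : B.IsHomogeneous f) : (A * B).IsHomogeneous (e + f) :=
  fun i j => MvPolynomial.IsHomogeneous.sum _ _ _ fun k _ => (hA i k).mul (hB k j)

theorem IsHomogeneous.fromCols {A : Matrix m n (MvPolynomial σ R)}
    {B : Matrix m o (MvPolynomial σ R)} {e : ℕ} (hA : A.IsHomogeneous e)
    (hB : B.IsHomogeneous e) : (fromCols A B).IsHomogeneous e := by
  rintro i (j | j)
  exacts [hA i j, hB i j]

theorem IsHomogeneous.fromBlocks {A : Matrix m n (MvPolynomial σ R)}
    {B : Matrix m o (MvPolynomial σ R)} {C : Matrix l n (MvPolynomial σ R)}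
    {D : Matrix l o (MvPolynomial σ R)} {e : ℕ} (hA : A.IsHomogeneous e)
    (hB : B.IsHomogeneous e) (hC : C.IsHomogeneous e) (hD : D.IsHomogeneous e) :
    (fromBlocks A B C D).IsHomogeneous e := by
  rintro (i | i) (j | j)
  exacts [hA i j, hB i j, hC i j, hD i j]

theorem isHomogeneous_smul_one [DecidableEq n] {r : MvPolynomial σ R} {e : ℕ}
    (hr : r.IsHomogeneous e) : (r • (1 : Matrix n n (MvPolynomial σ R))).IsHomogeneous e := by
  intro i j
  rw [smul_apply, one_apply, smul_eq_mul]
  split_ifs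
  · rwa [mul_one]
  · rw [mul_zero]
    exact isHomogeneous_zero σ R e

theorem IsHomogeneous.exists_isHomogeneous_mul_eq [Fintype n] {A : Matrix m n (MvPolynomial σ R)}
    {B : Matrix m o (MvPolynomial σ R)} {e c : ℕ} (hA : A.IsHomogeneous e)
    (hB : B.IsHomogeneous (e + c)) (h : ∃ X : Matrix n o (MvPolynomial σ R), A * X = B) :
    ∃ X : Matrix n o (MvPolynomial σ R), X.IsHomogeneous c ∧ A * X = B := by
  obtain ⟨X, rfl⟩ := h
  refine ⟨X.map (homogeneousComponent c), fun i j => homogeneousComponent_isHomogeneous _ _,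
    Matrix.ext fun i j => ?_⟩
  rw [← homogeneousComponent_eq_self (hB i j)]
  simp [mul_apply, map_sum, (hA _ _).homogeneousComponent_mul]

end Homogeneous

end Matrix

/-- `d i` is the matrix of a map `R^{ι (i + 1)} → R^{ι i}`, acting by `mulVec`. In a resolution
of an ideal `J` the index type `ι 0` is a point, so `d 0` is a row of generators of `J` and the
complex is `⋯ → R^{ι 1} → R → R ⧸ J → 0`. -/
structure MatrixComplex (R : Type*) where
  ι : ℕ → Type
  [instFintype : ∀ i, Fintype (ι i)]
  d : ∀ i, Matrix (ι i) (ι (i + 1)) R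

namespace MatrixComplex

attribute [instance] instFintype

section Resolution
variable {R : Type*} [CommRing R]

structure IsResolution (C : MatrixComplex R) (J : Ideal R) : Prop where
  nonempty_unique : Nonempty (Unique (C.ι 0))
  span_range_d_zero : ∀ j, Ideal.span (Set.range (C.d 0 j)) = J
  exact : ∀ i, Function.Exact (C.d (i + 1)).mulVec (C.d i).mulVec

def IsChainMap (F G : MatrixComplex R) (ψ : ∀ i, Matrix (F.ι i) (G.ι i) R) : Prop :=
  ∀ i, F.d i * ψ (i + 1) = ψ i * G.d i

variable {C : MatrixComplex R} {J : Ideal R}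

theorem IsResolution.d_mul_d (hC : C.IsResolution J) (i : ℕ) : C.d i * C.d (i + 1) = 0 :=
  mul_eq_zero_of_exact (hC.exact i)

theorem IsResolution.d_zero_mem (hC : C.IsResolution J) (j : C.ι 0) (k : C.ι 1) :
    C.d 0 j k ∈ J :=
  hC.span_range_d_zero j ▸ Ideal.subset_span ⟨k, rfl⟩

theorem IsResolution.mem_range_d_zero_iff (hC : C.IsResolution J) {v : C.ι 0 → R} :
    v ∈ Set.range (C.d 0).mulVec ↔ ∀ j, v j ∈ J := by
  obtain ⟨_⟩ := hC.nonempty_unique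
  refine ⟨?_, fun hv => ?_⟩
  · rintro ⟨w, rfl⟩ j
    exact Ideal.sum_mem _ fun k _ => Ideal.mul_mem_right _ _ (hC.d_zero_mem j k)
  · have hv₀ := hv default
    rw [← hC.span_range_d_zero default, Submodule.mem_span_range_iff_exists_fun] at hv₀
    obtain ⟨c, hc⟩ := hv₀
    refine ⟨c, funext fun j => ?_⟩
    rw [Unique.eq_default j, ← hc]
    simp [mulVec, dotProduct, mul_comm]

theorem IsResolution.exists_d_zero_mul_eq (hC : C.IsResolution J) {n : Type*}
    {B : Matrix (C.ι 0) n R} (hB : ∀ j k, B j k ∈ J) : ∃ X : Matrix (C.ι 1) n R, C.d 0 * X = B :=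
  exists_mul_eq_of_forall_mem_range fun k => hC.mem_range_d_zero_iff.2 fun j => hB j k

def unit (R : Type*) [Zero R] : MatrixComplex R where
  ι
    | 0 => Unit
    | _ + 1 => Empty
  instFintype
    | 0 => inferInstanceAs (Fintype Unit)
    | _ + 1 => inferInstanceAs (Fintype Empty)
  d _ := 0

theorem isResolution_unit : (unit R).IsResolution ⊥ where
  nonempty_unique := ⟨inferInstanceAs (Unique Unit)⟩
  span_range_d_zero _ := by
    have : IsEmpty ((unit R).ι 1) := inferInstanceAs (IsEmpty Empty)
    rw [Set.range_eq_empty, Ideal.span_empty]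
  exact i y := by
    have : IsEmpty ((unit R).ι (i + 1)) := inferInstanceAs (IsEmpty Empty)
    rw [Subsingleton.elim y 0]
    exact iff_of_true (mulVec_zero _) ⟨0, Subsingleton.elim _ _⟩

def coneObj (F G : MatrixComplex R) : ℕ → Type
  | 0 => F.ι 0
  | i + 1 => F.ι (i + 1) ⊕ G.ι i

instance (F G : MatrixComplex R) : ∀ i, Fintype (coneObj F G i)
  | 0 => inferInstanceAs (Fintype (F.ι 0))
  | i + 1 => inferInstanceAs (Fintype (F.ι (i + 1) ⊕ G.ι i))

/-- The mapping cone of `ψ : G → F`, where `G` is shifted by one so that the augmentation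
`G.d 0` becomes a differential of the cone. -/
def cone (F G : MatrixComplex R) (ψ : ∀ i, Matrix (F.ι i) (G.ι i) R) : MatrixComplex R where
  ι := coneObj F G
  d
    | 0 => fromCols (F.d 0) (ψ 0)
    | i + 1 => fromBlocks (F.d (i + 1)) (ψ (i + 1)) 0 (-G.d i)

theorem IsResolution.cone {F G : MatrixComplex R} {J' : Ideal R}
    (hF : F.IsResolution J) (hG : G.IsResolution J') {ψ : ∀ i, Matrix (F.ι i) (G.ι i) R}
    (hψ : IsChainMap F G ψ) {f : R} (hψ₀ : ∀ j k, ψ 0 j k = f) (hf : ∀ q, q * f ∈ J → q ∈ J') :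
    (cone F G ψ).IsResolution (J ⊔ Ideal.span {f}) where
  nonempty_unique := hF.nonempty_unique
  span_range_d_zero j := by
    obtain ⟨_⟩ := hG.nonempty_unique
    have hrange : Set.range (ψ 0 j) = {f} := by
      rw [show ψ 0 j = fun _ => f from funext (hψ₀ j), Set.range_const]
    show Ideal.span (Set.range (Sum.elim (F.d 0 j) (ψ 0 j))) = _
    rw [Set.Sum.elim_range, hrange, Ideal.span_union, ← hF.span_range_d_zero j]
  exact
    | 0 => by
      refine exact_mulVec_fromBlocks_fromCols (hF.exact 0) (hψ 0) fun b hb => ?_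
      obtain ⟨_⟩ := hF.nonempty_unique
      obtain ⟨_⟩ := hG.nonempty_unique
      have hbf : b default * f ∈ J := by
        simpa [mulVec, dotProduct, hψ₀, mul_comm] using hF.mem_range_d_zero_iff.1 hb default
      exact hG.mem_range_d_zero_iff.2 fun k => Unique.eq_default k ▸ hf _ hbf
    | i + 1 => exact_mulVec_fromBlocks_fromBlocks (hF.exact (i + 1)) (hG.exact i) (hψ (i + 1))

end Resolution

section Linear
variable {σ R : Type*} [CommRing R]

structure IsLinear (C : MatrixComplex (MvPolynomial σ R)) (d : ℕ) : Prop where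
  d_zero : (C.d 0).IsHomogeneous d
  d_succ : ∀ i, (C.d (i + 1)).IsHomogeneous 1

theorem IsLinear.isHomogeneous_d {C : MatrixComplex (MvPolynomial σ R)} (hC : C.IsLinear 1) :
    ∀ i, (C.d i).IsHomogeneous 1
  | 0 => hC.d_zero
  | i + 1 => hC.d_succ i

theorem isLinear_unit (d : ℕ) : (unit (MvPolynomial σ R)).IsLinear d :=
  ⟨fun _ k => (k : Empty).elim, fun _ _ k => (k : Empty).elim⟩

theorem IsLinear.cone {F G : MatrixComplex (MvPolynomial σ R)} {d : ℕ} (hF : F.IsLinear d)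
    (hG : G.IsLinear 1) {ψ : ∀ i, Matrix (F.ι i) (G.ι i) (MvPolynomial σ R)}
    (hψ₀ : (ψ 0).IsHomogeneous d) (hψ : ∀ i, (ψ (i + 1)).IsHomogeneous 1) :
    (cone F G ψ).IsLinear d where
  d_zero := hF.d_zero.fromCols hψ₀
  d_succ i := (hF.d_succ i).fromBlocks (hψ i) (fun _ _ => isHomogeneous_zero _ _ _)
    fun j k => (hG.isHomogeneous_d i j k).neg

theorem isChainMap_smul_one (C : MatrixComplex (MvPolynomial σ R)) [∀ i, DecidableEq (C.ι i)]
    (r : MvPolynomial σ R) : IsChainMap C C fun _ => r • 1 := fun i => by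
  rw [Matrix.mul_smul, Matrix.mul_one, Matrix.smul_mul, Matrix.one_mul]

open scoped Classical in
noncomputable def koszul : List σ → MatrixComplex (MvPolynomial σ R)
  | [] => unit _
  | x :: l => cone (koszul l) (koszul l) fun i =>
    (X x : MvPolynomial σ R) • (1 : Matrix ((koszul l).ι i) ((koszul l).ι i) _)

theorem isLinear_koszul : ∀ l : List σ, (koszul (R := R) l).IsLinear 1
  | [] => isLinear_unit 1
  | x :: l => by
    classical
    have hX := isHomogeneous_X R x
    exact (isLinear_koszul l).cone (isLinear_koszul l) (isHomogeneous_smul_one hX)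
      fun _ => isHomogeneous_smul_one hX

theorem isResolution_koszul :
    ∀ l : List σ, l.Nodup → (koszul (R := R) l).IsResolution (Ideal.span (X '' {y | y ∈ l}))
  | [], _ => by
    rw [show {y | y ∈ ([] : List σ)} = ∅ by simp, Set.image_empty, Ideal.span_empty]
    exact isResolution_unit
  | x :: l, hxl => by
    classical
    obtain ⟨hx, hl⟩ := List.nodup_cons.1 hxl
    have hK := isResolution_koszul l hl
    obtain ⟨_⟩ := hK.nonempty_unique
    have hxK := hK.cone hK (isChainMap_smul_one _ (X x)) (f := X x)
      (fun j k => by simp [Subsingleton.elim j k])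
      fun q hq => mem_ideal_span_X_image_of_mul_X_mem (s := {y | y ∈ l}) hx hq
    rwa [show {y | y ∈ x :: l} = insert x {y | y ∈ l} by ext; simp, Set.image_insert_eq,
      Ideal.span_insert, sup_comm]

theorem IsResolution.exists_isChainMap {F G : MatrixComplex (MvPolynomial σ R)}
    {J : Ideal (MvPolynomial σ R)} {d : ℕ} (hF : F.IsResolution J) (hFd : F.IsLinear d)
    (hG : ∀ i, G.d i * G.d (i + 1) = 0) (hGd : G.IsLinear 1)
    {ψ₀ : Matrix (F.ι 0) (G.ι 0) (MvPolynomial σ R)} (hψ₀ : ψ₀.IsHomogeneous d)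
    (hψ₀G : ∀ j k, (ψ₀ * G.d 0) j k ∈ J) :
    ∃ ψ : ∀ i, Matrix (F.ι i) (G.ι i) (MvPolynomial σ R),
      ψ 0 = ψ₀ ∧ (∀ i, (ψ (i + 1)).IsHomogeneous 1) ∧ IsChainMap F G ψ := by
  obtain ⟨ψ₁, hψ₁, hFψ₁⟩ := hFd.d_zero.exists_isHomogeneous_mul_eq (c := 1)
    (hψ₀.mul hGd.d_zero) (hF.exists_d_zero_mul_eq hψ₀G)
  -- The columns of `φ * G.d (i + 1)` are cycles of `F`, so `φ` can be lifted one step further.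
  let T (i : ℕ) := {φ : Matrix (F.ι (i + 1)) (G.ι (i + 1)) (MvPolynomial σ R) //
    φ.IsHomogeneous 1 ∧ F.d i * φ * G.d (i + 1) = 0}
  have step (i : ℕ) (φ : T i) :
      ∃ φ' : T (i + 1), F.d (i + 1) * φ'.1 = φ.1 * G.d (i + 1) := by
    obtain ⟨φ, hφ, hFφG⟩ := φ
    obtain ⟨φ', hφ', hFφ'⟩ := (hFd.d_succ i).exists_isHomogeneous_mul_eq
      (hφ.mul (hGd.d_succ i)) (exists_mul_eq_of_exact (hF.exact i) (by rw [← Matrix.mul_assoc, hFφG]))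
    exact ⟨⟨φ', hφ', by rw [hFφ', Matrix.mul_assoc, hG, Matrix.mul_zero]⟩, hFφ'⟩
  choose next hnext using step
  let lift (i : ℕ) : T i := Nat.rec ⟨ψ₁, hψ₁, by rw [hFψ₁, Matrix.mul_assoc, hG, Matrix.mul_zero]⟩
    next i
  refine ⟨fun | 0 => ψ₀ | i + 1 => (lift i).1, rfl, fun i => (lift i).2.1, ?_⟩
  rintro (_ | i)
  exacts [hFψ₁, hnext i (lift i)]

theorem IsResolution.exists_isResolution_sup_span_singleton
    {F : MatrixComplex (MvPolynomial σ R)} {J : Ideal (MvPolynomial σ R)} {d : ℕ}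
    (hF : F.IsResolution J) (hFd : F.IsLinear d) {f : MvPolynomial σ R} (hf : f.IsHomogeneous d)
    {l : List σ} (hl : l.Nodup) (hJf : J.colon (Ideal.span {f}) = Ideal.span (X '' {y | y ∈ l})) :
    ∃ C : MatrixComplex (MvPolynomial σ R), C.IsResolution (J ⊔ Ideal.span {f}) ∧ C.IsLinear d := by
  have hK := isResolution_koszul (R := R) l hl
  have hKf (q) : q ∈ Ideal.span (X '' {y | y ∈ l}) ↔ q * f ∈ J := by
    rw [← hJf, Ideal.mem_colon_span_singleton]
  obtain ⟨ψ, hψ₀, hψ, hψc⟩ := hF.exists_isChainMap hFd hK.d_mul_d (isLinear_koszul l)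
    (ψ₀ := of fun _ _ => f) (fun _ _ => hf) fun j k => by
      rw [mul_apply]
      refine Ideal.sum_mem _ fun k' _ => ?_
      rw [of_apply, mul_comm, ← hKf]
      exact hK.d_zero_mem k' k
  exact ⟨F.cone (koszul l) ψ, hF.cone hK hψc (fun j k => by rw [hψ₀, of_apply]) fun q => (hKf q).2,
    hFd.cone (isLinear_koszul l) (hψ₀ ▸ fun _ _ => hf) hψ⟩

theorem exists_isResolution_of_colon_eq_span_X [Finite σ] {m d : ℕ}
    (f : Fin m → MvPolynomial σ R) (hf : ∀ i, (f i).IsHomogeneous d)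
    (hcolon : ∀ i, ∃ s : Set σ,
      (Ideal.span (f '' {j | j < i})).colon (Ideal.span {f i}) = Ideal.span (X '' s)) :
    ∀ k ≤ m, ∃ C : MatrixComplex (MvPolynomial σ R),
      C.IsResolution (Ideal.span (f '' {j | j.val < k})) ∧ C.IsLinear d := by
  intro k
  induction k with
  | zero =>
    intro _
    refine ⟨unit _, ?_, isLinear_unit d⟩
    rw [show {j : Fin m | j.val < 0} = ∅ by simp, Set.image_empty, Ideal.span_empty]
    exact isResolution_unit
  | succ k ih =>
    intro hk
    obtain ⟨F, hF, hFd⟩ := ih (by omega)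
    obtain ⟨s, hs⟩ := hcolon ⟨k, hk⟩
    let l := s.toFinite.toFinset.toList
    have hl : {y | y ∈ l} = s := by ext; simp [l]
    have hlt : {j : Fin m | j < ⟨k, hk⟩} = {j | j.val < k} := rfl
    rw [hlt, ← hl] at hs
    obtain ⟨C, hC, hCd⟩ := hF.exists_isResolution_sup_span_singleton hFd (hf _)
      (Finset.nodup_toList _) hs
    refine ⟨C, ?_, hCd⟩
    rwa [show {j : Fin m | j.val < k + 1} = insert ⟨k, hk⟩ {j | j.val < k} by
      ext j; simp [Fin.ext_iff]; omega, Set.image_insert_eq, Ideal.span_insert, sup_comm]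

end Linear

theorem IsResolution.hasLinearResolution {K σ : Type*} [Field K]
    {C : MatrixComplex (MvPolynomial σ K)} {I : Ideal (MvPolynomial σ K)} {d : ℕ}
    (hC : C.IsResolution I) (hCd : C.IsLinear d) : HasLinearResolution I d := by
  obtain ⟨_⟩ := hC.nonempty_unique
  let e (i : ℕ) := Fintype.equivFin (C.ι i)
  let M (i : ℕ) := (C.d (i + 1)).submatrix (e (i + 1)).symm (e (i + 2)).symm
  have hM (i : ℕ) : Function.Exact (M (i + 1)).mulVec (M i).mulVec :=
    (exact_mulVec_submatrix_iff _ _ _).2 (hC.exact (i + 1))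
  have hM₀ : Function.Exact (M 0).mulVec ((C.d 0).submatrix id (e 1).symm).mulVec :=
    (exact_mulVec_submatrix_iff (Equiv.refl _) _ _).2 (hC.exact 0)
  refine ⟨fun i => Fintype.card (C.ι (i + 1)), fun j => C.d 0 default ((e 1).symm j), M,
    fun j => hCd.d_zero _ _, ?_, fun i j k => hCd.d_succ i _ _, fun v => ?_,
    fun i v => (hM i v).trans (exists_congr fun w => eq_comm)⟩
  · rw [← hC.span_range_d_zero default]
    exact congrArg Ideal.span ((e 1).symm.surjective.range_comp _).symm
  · refine Iff.trans ?_ ((hM₀ v).trans (exists_congr fun w => eq_comm))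
    simp [_root_.funext_iff, Unique.forall_iff, mulVec, dotProduct, mul_comm]

end MatrixComplex

theorem hasLinearResolution_of_linearQuotients_general {K : Type*} [Field K] {n m : ℕ} (d : ℕ)
    (I : Ideal (MvPolynomial (Fin n) K)) (u : Fin m → (Fin n →₀ ℕ))
    (hd : ∀ i, (u i).sum (fun _ e => e) = d)
    (hgen : I = Ideal.span (Set.range fun i => (monomial (u i) (1 : K) :
      MvPolynomial (Fin n) K)))
    (hlq : ∀ i : Fin m, ∃ s : Set (Fin n),
      Submodule.colon
          (Ideal.span ((fun j => (monomial (u j) (1 : K) : MvPolynomial (Fin n) K)) ''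
            {j : Fin m | j < i}))
          (Ideal.span {(monomial (u i) (1 : K) : MvPolynomial (Fin n) K)})
        = Ideal.span ((fun x => (X x : MvPolynomial (Fin n) K)) '' s)) :
    HasLinearResolution I d := by
  obtain ⟨C, hC, hCd⟩ := MatrixComplex.exists_isResolution_of_colon_eq_span_X _
    (fun i => isHomogeneous_monomial _ (hd i)) hlq m le_rfl
  rw [show {j : Fin m | j.val < m} = Set.univ from Set.eq_univ_of_forall Fin.is_lt,
    Set.image_univ, ← hgen] at hC
  exact hC.hasLinearResolution hCd

/-- An equigenerated monomial ideal (all minimal generators of degree `d`) with linear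
quotients has a `d`-linear resolution. -/
theorem hasLinearResolution_of_linearQuotients {K : Type*} [Field K] {n m : ℕ} (d : ℕ)
    (I : Ideal (MvPolynomial (Fin n) K)) (u : Fin m → (Fin n →₀ ℕ))
    (hd : ∀ i, (u i).sum (fun _ e => e) = d)
    (hgen : I = Ideal.span (Set.range fun i => (monomial (u i) (1 : K) :
      MvPolynomial (Fin n) K)))
    (hmin : ∀ i j : Fin m, u i ≤ u j → i = j)
    (hlq : ∀ i : Fin m, ∃ s : Set (Fin n),
      Submodule.colon
          (Ideal.span ((fun j => (monomial (u j) (1 : K) : MvPolynomial (Fin n) K)) ''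
            {j : Fin m | j < i}))
          (Ideal.span {(monomial (u i) (1 : K) : MvPolynomial (Fin n) K)})
        = Ideal.span ((fun x => (X x : MvPolynomial (Fin n) K)) '' s)) :
    HasLinearResolution I d :=
  hasLinearResolution_of_linearQuotients_general d I u hd hgen hlq
end

section
/- In S = K[a,b,c,d], let I = (a²b, abc, bcd, cd²) and P = (b,c). Then I has linear quotients and I ⊆ P, but the product PI does not have a linear resolution. -/
open MvPolynomial

/-- A monomial ideal `I` has linear quotients: there is an ordering `u 0 > u 1 > ...`
of its minimal monomial generators (given by exponent vectors) such that each colon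
ideal `(u 0, ..., u (i-1)) : u i` is generated by variables. -/
def HasLinearQuotients {K : Type*} [Field K] {n : ℕ}
    (I : Ideal (MvPolynomial (Fin n) K)) : Prop :=
  ∃ (m : ℕ) (u : Fin m → (Fin n →₀ ℕ)),
    (∀ i j : Fin m, u i ≤ u j → i = j) ∧
    I = Ideal.span (Set.range fun i => (MvPolynomial.monomial (u i) (1 : K) :
      MvPolynomial (Fin n) K)) ∧
    ∀ i : Fin m, ∃ s : Set (Fin n),
      Submodule.colon
          (Ideal.span ((fun j => (MvPolynomial.monomial (u j) (1 : K) :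
            MvPolynomial (Fin n) K)) '' {j : Fin m | j < i}))
          (Ideal.span {(MvPolynomial.monomial (u i) (1 : K) : MvPolynomial (Fin n) K)})
        = Ideal.span ((fun x => (MvPolynomial.X x : MvPolynomial (Fin n) K)) '' s)


namespace CHAux
variable {K : Type*} [Field K]

/-- support of `p * monomial u 1` -/
lemma support_mul_monomial (p : MvPolynomial (Fin 4) K) (u : Fin 4 →₀ ℕ) :
    (p * monomial u 1).support = p.support.map (addRightEmbedding u) :=
  AddMonoidAlgebra.support_coeff_mul_single p _ (by simp) _

lemma forall4 {p : Fin 4 → Prop} : (∀ i, p i) ↔ p 0 ∧ p 1 ∧ p 2 ∧ p 3 :=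
  ⟨fun h => ⟨h 0, h 1, h 2, h 3⟩, by rintro ⟨h0, h1, h2, h3⟩ i; fin_cases i <;> assumption⟩

/-- Colon of monomial ideals, support-wise criterion. -/
lemma colon_span_monomial (G : Set (Fin 4 →₀ ℕ)) (u : Fin 4 →₀ ℕ) (s : Set (Fin 4))
    (h : ∀ β : Fin 4 →₀ ℕ, (∃ γ ∈ G, γ ≤ β + u) ↔ ∃ i ∈ s, β i ≠ 0) :
    Submodule.colon (Ideal.span ((fun γ => (monomial γ (1 : K) : MvPolynomial (Fin 4) K)) '' G))
        (Ideal.span {(monomial u (1 : K) : MvPolynomial (Fin 4) K)})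
      = Ideal.span ((fun x => (MvPolynomial.X x : MvPolynomial (Fin 4) K)) '' s) := by
  ext f
  simp only [Ideal.span] at *
  rw [Submodule.mem_colon_span_singleton, smul_eq_mul, Ideal.submodule_span_eq,
    Ideal.submodule_span_eq, mem_ideal_span_monomial_image,
    mem_ideal_span_X_image, support_mul_monomial]
  constructor
  · intro hf β hβ
    have := hf (β + u) (Finset.mem_map.2 ⟨β, hβ, rfl⟩)
    exact (h β).1 (by simpa using this)
  · intro hf β hβ
    obtain ⟨β', hβ', rfl⟩ := Finset.mem_map.1 hβ
    exact (h β').2 (hf β' hβ')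

end CHAux

namespace CHAux
variable {K : Type*} [Field K]

noncomputable def uu : Fin 4 → (Fin 4 →₀ ℕ)
  | 0 => Finsupp.single 0 2 + Finsupp.single 1 1
  | 1 => Finsupp.single 0 1 + Finsupp.single 1 1 + Finsupp.single 2 1
  | 2 => Finsupp.single 1 1 + Finsupp.single 2 1 + Finsupp.single 3 1
  | 3 => Finsupp.single 2 1 + Finsupp.single 3 2

lemma mono_uu_0 : (monomial (uu 0) (1:K)) = X 0 ^ 2 * X 1 := by
  simp [uu, X, monomial_mul, pow_two]
  ext i
  fin_cases i <;> simp [Finsupp.single_apply]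
lemma mono_uu_1 : (monomial (uu 1) (1:K)) = X 0 * X 1 * X 2 := by
  simp [uu, X, monomial_mul]
lemma mono_uu_2 : (monomial (uu 2) (1:K)) = X 1 * X 2 * X 3 := by
  simp [uu, X, monomial_mul]
lemma mono_uu_3 : (monomial (uu 3) (1:K)) = X 2 * X 3 ^ 2 := by
  simp [uu, X, monomial_mul, pow_two]
  ext i
  fin_cases i <;> simp [Finsupp.single_apply]

lemma antichain_uu : ∀ i j : Fin 4, uu i ≤ uu j → i = j := by
  intro i j hij
  fin_cases i <;> fin_cases j <;>
    first
      | rfl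
      | (exfalso; revert hij;
         simp [uu, Finsupp.le_def, Fin.forall_fin_succ, Finsupp.single_apply] <;> decide)

lemma range_uu : Set.range (fun i => (monomial (uu i) (1:K) : MvPolynomial (Fin 4) K))
    = {X 0 ^ 2 * X 1, X 0 * X 1 * X 2, X 1 * X 2 * X 3, X 2 * X 3 ^ 2} := by
  ext z
  constructor
  · rintro ⟨i, rfl⟩
    fin_cases i <;>
      simp [mono_uu_0, mono_uu_1, mono_uu_2, mono_uu_3]
  · rintro (rfl | rfl | rfl | rfl)
    exacts [⟨0, mono_uu_0⟩, ⟨1, mono_uu_1⟩, ⟨2, mono_uu_2⟩, ⟨3, mono_uu_3⟩]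
end CHAux

namespace CHAux
variable {K : Type*} [Field K]

lemma hlq (I : Ideal (MvPolynomial (Fin 4) K))
    (hI : I = Ideal.span {X 0 ^ 2 * X 1, X 0 * X 1 * X 2, X 1 * X 2 * X 3, X 2 * X 3 ^ 2}) :
    HasLinearQuotients I := by
  refine ⟨4, uu, antichain_uu, by rw [hI, range_uu], ?_⟩
  intro i
  fin_cases i <;>
    simp only [Fin.zero_eta, Fin.mk_one, Fin.isValue,
      show (⟨2, by omega⟩ : Fin 4) = 2 from rfl, show (⟨3, by omega⟩ : Fin 4) = 3 from rfl]
  · -- i = 0 : empty previous set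
    refine ⟨∅, ?_⟩
    have := colon_span_monomial (K := K) ∅ (uu 0) ∅ (by simp)
    simpa using this
  · -- i = 1
    refine ⟨{0}, ?_⟩
    have h0 : ({j : Fin 4 | j < 1} : Set (Fin 4)) = {0} := by
      ext j; fin_cases j <;> simp <;> decide
    have himg : (fun j => (monomial (uu j) (1:K) : MvPolynomial (Fin 4) K)) '' {j : Fin 4 | j < 1}
        = (fun γ => (monomial γ (1:K) : MvPolynomial (Fin 4) K)) '' {uu 0} := by
      rw [← Set.image_image (g := fun γ => (monomial γ (1:K) : MvPolynomial (Fin 4) K)) (f := uu)]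
      congr 1
      rw [h0, Set.image_singleton]
    rw [himg]
    refine colon_span_monomial {uu 0} (uu 1) {0} ?_
    intro β
    simp [uu, Finsupp.le_def, forall4, Finsupp.single_apply]
    omega
  · -- i = 2
    refine ⟨{0}, ?_⟩
    have h0 : ({j : Fin 4 | j < 2} : Set (Fin 4)) = {0, 1} := by
      ext j; fin_cases j <;> simp <;> decide
    have himg : (fun j => (monomial (uu j) (1:K) : MvPolynomial (Fin 4) K)) '' {j : Fin 4 | j < 2}
        = (fun γ => (monomial γ (1:K) : MvPolynomial (Fin 4) K)) '' {uu 0, uu 1} := by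
      rw [← Set.image_image (g := fun γ => (monomial γ (1:K) : MvPolynomial (Fin 4) K)) (f := uu)]
      congr 1
      rw [h0]
      simp [Set.image_insert_eq]
    rw [himg]
    refine colon_span_monomial {uu 0, uu 1} (uu 2) {0} ?_
    intro β
    simp [uu, Finsupp.le_def, forall4, Finsupp.single_apply]
    omega
  · -- i = 3
    refine ⟨{1}, ?_⟩
    have h0 : ({j : Fin 4 | j < 3} : Set (Fin 4)) = {0, 1, 2} := by
      ext j; fin_cases j <;> simp <;> decide
    have himg : (fun j => (monomial (uu j) (1:K) : MvPolynomial (Fin 4) K)) '' {j : Fin 4 | j < 3}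
        = (fun γ => (monomial γ (1:K) : MvPolynomial (Fin 4) K)) '' {uu 0, uu 1, uu 2} := by
      rw [← Set.image_image (g := fun γ => (monomial γ (1:K) : MvPolynomial (Fin 4) K)) (f := uu)]
      congr 1
      rw [h0]
      simp [Set.image_insert_eq]
    rw [himg]
    refine colon_span_monomial {uu 0, uu 1, uu 2} (uu 3) {1} ?_
    intro β
    simp [uu, Finsupp.le_def, forall4, Finsupp.single_apply]
    omega
end CHAux
namespace CHAux
open Finsupp
variable {K : Type*} [Field K]

noncomputable def νν : Fin 8 → (Fin 4 →₀ ℕ)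
  | 0 => single 0 2 + single 1 2
  | 1 => single 0 2 + single 1 1 + single 2 1
  | 2 => single 0 1 + single 1 2 + single 2 1
  | 3 => single 0 1 + single 1 1 + single 2 2
  | 4 => single 1 2 + single 2 1 + single 3 1
  | 5 => single 1 1 + single 2 2 + single 3 1
  | 6 => single 1 1 + single 2 1 + single 3 2
  | 7 => single 2 2 + single 3 2

noncomputable def nn : Fin 8 → MvPolynomial (Fin 4) K := fun i => monomial (νν i) 1

lemma finsupp_ext4 {α β : Fin 4 →₀ ℕ} (h0 : α 0 = β 0) (h1 : α 1 = β 1)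
    (h2 : α 2 = β 2) (h3 : α 3 = β 3) : α = β := by
  ext i; fin_cases i <;> assumption

lemma degree4 (d : Fin 4 →₀ ℕ) : d.degree = d 0 + d 1 + d 2 + d 3 := by
  rw [Finsupp.degree_eq_sum, Fin.sum_univ_four]

lemma degree4_add (α β : Fin 4 →₀ ℕ) : (α + β).degree = α.degree + β.degree := by
  simp only [degree4, Finsupp.add_apply]; ring

lemma degree_mono {α β : Fin 4 →₀ ℕ} (h : α ≤ β) : α.degree ≤ β.degree := by
  rw [Finsupp.le_def] at h
  have h0 := h 0; have h1 := h 1; have h2 := h 2; have h3 := h 3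
  simp only [degree4]; omega

lemma hdegν : ∀ i, (νν i).degree = 4 := by
  intro i; fin_cases i <;>
    simp [νν, degree4, Finsupp.single_apply]

lemma nn_homog (i : Fin 8) : (nn (K := K) i).IsHomogeneous 4 :=
  isHomogeneous_monomial _ (hdegν i)

lemma eq_of_le_of_degree_eq {α β : Fin 4 →₀ ℕ} (h : α ≤ β) (hd : α.degree = β.degree) :
    α = β := by
  rw [Finsupp.le_def] at h
  have h0 := h 0; have h1 := h 1; have h2 := h 2; have h3 := h 3
  rw [degree4, degree4] at hd
  exact finsupp_ext4 (by omega) (by omega) (by omega) (by omega)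

lemma homog_smul (a : K) {p : MvPolynomial (Fin 4) K} {n : ℕ} (hp : p.IsHomogeneous n) :
    (a • p).IsHomogeneous n := by
  intro d hd
  rw [coeff_smul, smul_eq_mul] at hd
  exact hp (right_ne_zero_of_mul hd)

lemma coeff_nn (i i' : Fin 8) : coeff (νν i') (nn (K := K) i) = if i = i' then 1 else 0 := by
  rw [nn, coeff_monomial]
  by_cases h : i = i'
  · subst h; simp
  · rw [if_neg h, if_neg]
    intro hh
    revert hh
    fin_cases i <;> fin_cases i' <;>
      first
        | (exact absurd rfl h)
        | simp [νν, Finsupp.ext_iff, forall4, Finsupp.single_apply]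

/-- every coefficient exponent of an element of the span of the `nn` has degree ≥ 4 -/
lemma mem_span_nn_deg {p : MvPolynomial (Fin 4) K} (hp : p ∈ Ideal.span (Set.range (nn (K := K))))
    {β : Fin 4 →₀ ℕ} (hβ : coeff β p ≠ 0) : 4 ≤ β.degree := by
  obtain ⟨q, hq⟩ := Submodule.mem_span_range_iff_exists_fun _ |>.1 hp
  rw [← hq] at hβ
  rw [coeff_sum] at hβ
  obtain ⟨i, -, hi⟩ := Finset.exists_ne_zero_of_sum_ne_zero hβ
  rw [smul_eq_mul, nn, coeff_mul_monomial'] at hi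
  by_cases hle : νν i ≤ β
  · calc 4 = (νν i).degree := (hdegν i).symm
    _ ≤ β.degree := degree_mono hle
  · rw [if_neg hle] at hi; exact absurd rfl hi

/-- extraction of scalar coefficients: homogeneous degree-4 member of span of `nn` -/
lemma scalar_rep_nn {p : MvPolynomial (Fin 4) K} (hph : p.IsHomogeneous 4)
    (hp : p ∈ Ideal.span (Set.range (nn (K := K)))) :
    ∃ A : Fin 8 → K, p = ∑ i, A i • nn i := by
  obtain ⟨q, hq⟩ := Submodule.mem_span_range_iff_exists_fun _ |>.1 hp
  refine ⟨fun i => coeff 0 (q i), ?_⟩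
  ext β
  rw [coeff_sum]
  by_cases hβ : β.degree = 4
  · rw [← hq, coeff_sum]
    refine Finset.sum_congr rfl ?_
    intro i _
    rw [smul_eq_mul, nn, coeff_mul_monomial', coeff_smul, coeff_monomial]
    by_cases hle : νν i ≤ β
    · have hβν : νν i = β := eq_of_le_of_degree_eq hle (by rw [hdegν i, hβ])
      rw [if_pos hle, if_pos hβν, hβν, tsub_self, mul_one, smul_eq_mul, mul_one]
    · rw [if_neg hle, if_neg, smul_zero]
      intro hh; exact hle (hh ▸ le_refl β)
  · rw [hph.coeff_eq_zero hβ]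
    symm
    refine Finset.sum_eq_zero ?_
    intro i _
    rw [coeff_smul, nn, coeff_monomial]
    by_cases hh : νν i = β
    · exact absurd (hh ▸ hdegν i) hβ
    · rw [if_neg hh, smul_zero]

/-- extraction of scalar coefficients w.r.t. a family of homogeneous degree-4 generators -/
lemma scalar_rep_g {r0 : ℕ} {g : Fin r0 → MvPolynomial (Fin 4) K}
    (hg : ∀ j, (g j).IsHomogeneous 4) {p : MvPolynomial (Fin 4) K} (hph : p.IsHomogeneous 4)
    (hp : p ∈ Ideal.span (Set.range g)) :
    ∃ C : Fin r0 → K, p = ∑ j, C j • g j := by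
  obtain ⟨q, hq⟩ := Submodule.mem_span_range_iff_exists_fun _ |>.1 hp
  refine ⟨fun j => coeff 0 (q j), ?_⟩
  ext β
  rw [coeff_sum]
  by_cases hβ : β.degree = 4
  · rw [← hq, coeff_sum]
    refine Finset.sum_congr rfl ?_
    intro j _
    rw [smul_eq_mul, coeff_mul, coeff_smul, smul_eq_mul]
    rw [Finset.sum_eq_single ((0 : Fin 4 →₀ ℕ), β)]
    · intro x hx hne
      rw [Finset.HasAntidiagonal.mem_antidiagonal] at hx
      by_cases h2 : x.2.degree = 4
      · exfalso
        have hd : x.1.degree + x.2.degree = 4 := by rw [← degree4_add, hx, hβ]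
        have h1 : x.1.degree = 0 := by omega
        have h10 : x.1 = 0 := (Finsupp.degree_eq_zero_iff _).1 h1
        apply hne
        rw [Prod.ext_iff]
        refine ⟨h10, ?_⟩
        rw [h10, zero_add] at hx
        exact hx
      · rw [(hg j).coeff_eq_zero h2, mul_zero]
    · intro hmem
      exfalso
      exact hmem (by rw [Finset.HasAntidiagonal.mem_antidiagonal, zero_add])
  · rw [hph.coeff_eq_zero hβ]
    symm
    refine Finset.sum_eq_zero ?_
    intro j _
    rw [coeff_smul, (hg j).coeff_eq_zero hβ, smul_zero]

noncomputable def μθ : Fin 4 →₀ ℕ := single 0 2 + single 1 1 + single 2 1 + single 3 1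

lemma key_theta : ∀ i : Fin 8, νν i ≤ μθ ↔ i = 1 := by
  intro i
  fin_cases i <;>
    simp [νν, μθ, Finsupp.le_def, forall4, Finsupp.single_apply]

lemma μθ_sub : μθ - νν 1 = single 3 1 := by
  ext i; fin_cases i <;> simp [νν, μθ, Finsupp.single_apply]

/-- The certificate: applying `coeff μθ` to a combination of the generators reads off
the coefficient of `X 3` in the second slot. -/
lemma theta_eq (c : Fin 8 → MvPolynomial (Fin 4) K) :
    coeff μθ (∑ i, c i * nn i) = coeff (single 3 1) (c 1) := by
  rw [coeff_sum]
  rw [Finset.sum_eq_single (1 : Fin 8)]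
  · rw [nn, coeff_mul_monomial', if_pos ((key_theta 1).2 rfl), μθ_sub, mul_one]
  · intro i _ hne
    rw [nn, coeff_mul_monomial', if_neg]
    intro hle
    exact hne ((key_theta i).1 hle)
  · intro h; exact absurd (Finset.mem_univ _) h

/-- reading off `coeff (single 3 2)` from a product with a linear form -/
lemma phi_mul {c w : MvPolynomial (Fin 4) K} (hc : c.IsHomogeneous 1) :
    coeff (single 3 2) (c * w) = coeff (single 3 1) c * coeff (single 3 1) w := by
  rw [coeff_mul]
  rw [Finset.sum_eq_single ((single 3 1 : Fin 4 →₀ ℕ), (single 3 1 : Fin 4 →₀ ℕ))]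
  · intro x hx hne
    rw [Finset.HasAntidiagonal.mem_antidiagonal] at hx
    by_cases h1 : x.1.degree = 1
    · exfalso
      apply hne
      have hx0 := DFunLike.congr_fun hx 0
      have hx1 := DFunLike.congr_fun hx 1
      have hx2 := DFunLike.congr_fun hx 2
      have hx3 := DFunLike.congr_fun hx 3
      simp only [Finsupp.add_apply, Finsupp.single_apply, Fin.reduceEq, reduceIte,
        if_true, if_false] at hx0 hx1 hx2 hx3
      rw [degree4] at h1
      have e1 : x.1 = single 3 1 := by
        ext i; fin_cases i <;> simp [Finsupp.single_apply] <;> omega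
      have e2 : x.2 = single 3 1 := by
        ext i; fin_cases i <;> simp [Finsupp.single_apply] <;> omega
      rw [Prod.ext_iff]; exact ⟨e1, e2⟩
    · rw [hc.coeff_eq_zero h1, zero_mul]
  · intro hmem
    exfalso
    apply hmem
    rw [Finset.HasAntidiagonal.mem_antidiagonal]
    ext i; fin_cases i <;> simp [Finsupp.single_apply]

end CHAux
namespace CHAux
open Finsupp
variable {K : Type*} [Field K]

lemma prod1 : (X 1 : MvPolynomial (Fin 4) K) * (X 0 ^ 2 * X 1) = nn 0 := by
  simp [nn, νν, X, monomial_mul, pow_two]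
  try (ext i; fin_cases i <;> simp [Finsupp.single_apply])

lemma prod2 : (X 2 : MvPolynomial (Fin 4) K) * (X 0 ^ 2 * X 1) = nn 1 := by
  simp [nn, νν, X, monomial_mul, pow_two]
  try (ext i; fin_cases i <;> simp [Finsupp.single_apply])

lemma prod3 : (X 1 : MvPolynomial (Fin 4) K) * (X 0 * X 1 * X 2) = nn 2 := by
  simp [nn, νν, X, monomial_mul, pow_two]
  try (ext i; fin_cases i <;> simp [Finsupp.single_apply])

lemma prod4 : (X 2 : MvPolynomial (Fin 4) K) * (X 0 * X 1 * X 2) = nn 3 := by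
  simp [nn, νν, X, monomial_mul, pow_two]
  try (ext i; fin_cases i <;> simp [Finsupp.single_apply])

lemma prod5 : (X 1 : MvPolynomial (Fin 4) K) * (X 1 * X 2 * X 3) = nn 4 := by
  simp [nn, νν, X, monomial_mul, pow_two]
  try (ext i; fin_cases i <;> simp [Finsupp.single_apply])

lemma prod6 : (X 2 : MvPolynomial (Fin 4) K) * (X 1 * X 2 * X 3) = nn 5 := by
  simp [nn, νν, X, monomial_mul, pow_two]
  try (ext i; fin_cases i <;> simp [Finsupp.single_apply])

lemma prod7 : (X 1 : MvPolynomial (Fin 4) K) * (X 2 * X 3 ^ 2) = nn 6 := by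
  simp [nn, νν, X, monomial_mul, pow_two]
  try (ext i; fin_cases i <;> simp [Finsupp.single_apply])

lemma prod8 : (X 2 : MvPolynomial (Fin 4) K) * (X 2 * X 3 ^ 2) = nn 7 := by
  simp [nn, νν, X, monomial_mul, pow_two]
  try (ext i; fin_cases i <;> simp [Finsupp.single_apply])

lemma hJ (I P : Ideal (MvPolynomial (Fin 4) K))
    (hI : I = Ideal.span {X 0 ^ 2 * X 1, X 0 * X 1 * X 2, X 1 * X 2 * X 3, X 2 * X 3 ^ 2})
    (hP : P = Ideal.span {(X 1 : MvPolynomial (Fin 4) K), X 2}) :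
    P * I = Ideal.span (Set.range (nn (K := K))) := by
  rw [hP, hI, Ideal.span_mul_span']
  congr 1
  ext z
  constructor
  · rintro ⟨x, hx, y, hy, rfl⟩
    simp only [Set.mem_insert_iff, Set.mem_singleton_iff] at hx hy
    rcases hx with rfl | rfl <;> rcases hy with rfl | rfl | rfl | rfl
    exacts [⟨0, prod1.symm⟩, ⟨2, prod3.symm⟩, ⟨4, prod5.symm⟩, ⟨6, prod7.symm⟩,
      ⟨1, prod2.symm⟩, ⟨3, prod4.symm⟩, ⟨5, prod6.symm⟩, ⟨7, prod8.symm⟩]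
  · rintro ⟨i, rfl⟩
    fin_cases i
    · exact ⟨X 1, by simp, X 0 ^ 2 * X 1, by simp, prod1⟩
    · exact ⟨X 2, by simp, X 0 ^ 2 * X 1, by simp, prod2⟩
    · exact ⟨X 1, by simp, X 0 * X 1 * X 2, by simp, prod3⟩
    · exact ⟨X 2, by simp, X 0 * X 1 * X 2, by simp, prod4⟩
    · exact ⟨X 1, by simp, X 1 * X 2 * X 3, by simp, prod5⟩
    · exact ⟨X 2, by simp, X 1 * X 2 * X 3, by simp, prod6⟩
    · exact ⟨X 1, by simp, X 2 * X 3 ^ 2, by simp, prod7⟩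
    · exact ⟨X 2, by simp, X 2 * X 3 ^ 2, by simp, prod8⟩

noncomputable def vv : Fin 8 → MvPolynomial (Fin 4) K := fun i =>
  if i = 1 then -(X 3 ^ 2) else if i = 6 then X 0 ^ 2 else 0

lemma hv : ∑ i, vv (K := K) i * nn i = 0 := by
  have e : (X 3 ^ 2 : MvPolynomial (Fin 4) K) * nn 1 = X 0 ^ 2 * nn 6 := by
    simp [nn, νν, X, monomial_mul, pow_two]
    try (ext i; fin_cases i <;> simp [Finsupp.single_apply])
  rw [Fin.sum_univ_eight]
  simp only [vv, Fin.reduceEq, reduceIte, if_true, if_false, zero_mul, add_zero, zero_add,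
    neg_mul]
  rw [neg_add_eq_zero]
  exact e

theorem no_linres (I P : Ideal (MvPolynomial (Fin 4) K))
    (hI : I = Ideal.span {X 0 ^ 2 * X 1, X 0 * X 1 * X 2, X 1 * X 2 * X 3, X 2 * X 3 ^ 2})
    (hP : P = Ideal.span {(X 1 : MvPolynomial (Fin 4) K), X 2}) :
    ¬ ∃ d : ℕ, HasLinearResolution (P * I) d := by
  rintro ⟨d, r, g, M, hg, hspan, hM, hres0, -⟩
  rw [hJ I P hI hP] at hspan
  have hgmem : ∀ j, g j ∈ Ideal.span (Set.range (nn (K := K))) := by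
    intro j; rw [hspan]; exact Ideal.subset_span ⟨j, rfl⟩
  have hnmem : ∀ i, nn (K := K) i ∈ Ideal.span (Set.range g) := by
    intro i; rw [← hspan]; exact Ideal.subset_span ⟨i, rfl⟩
  -- first: d = 4
  have h1 : coeff (νν 0) (nn (K := K) 0) = 1 := by rw [coeff_nn]; simp
  have hd : d = 4 := by
    by_contra hd4
    obtain ⟨q, hq⟩ := Submodule.mem_span_range_iff_exists_fun _ |>.1 (hnmem 0)
    have hzero : coeff (νν 0) (nn (K := K) 0) = 0 := by
      rw [← hq, coeff_sum]
      refine Finset.sum_eq_zero fun j _ => ?_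
      rw [smul_eq_mul, coeff_mul]
      refine Finset.sum_eq_zero fun x hx => ?_
      rw [Finset.HasAntidiagonal.mem_antidiagonal] at hx
      by_cases hz : coeff x.2 (g j) = 0
      · rw [hz, mul_zero]
      · exfalso
        have hdeg : x.2.degree = d := by
          by_contra hne
          exact hz ((hg j).coeff_eq_zero hne)
        have h4le : 4 ≤ x.2.degree := mem_span_nn_deg (hgmem j) hz
        have hsum : x.1.degree + x.2.degree = 4 := by
          rw [← degree4_add, hx, hdegν 0]
        omega
    rw [h1] at hzero
    exact one_ne_zero hzero
  subst hd
  -- scalar matrices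
  choose A hA using fun j => scalar_rep_nn (hg j) (hgmem j)
  choose C hC using fun i => scalar_rep_g hg (nn_homog i) (hnmem i)
  -- coeff (νν 1) (g j) = A j 1
  have hgco : ∀ j, coeff (νν 1) (g j) = A j 1 := by
    intro j
    rw [hA j, coeff_sum]
    rw [Finset.sum_eq_single (1 : Fin 8)]
    · rw [coeff_smul, coeff_nn, if_pos rfl, smul_eq_mul, mul_one]
    · intro i _ hne
      rw [coeff_smul, coeff_nn, if_neg hne, smul_zero]
    · intro h; exact absurd (Finset.mem_univ _) h
  -- (CA)_{i,1} = δ_{i,1}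
  have hCA1 : ∀ i, (∑ j, C i j * A j 1) = if i = 1 then (1 : K) else 0 := by
    intro i
    have hc := congrArg (coeff (νν 1)) (hC i)
    rw [coeff_nn, coeff_sum] at hc
    have h2 : ∑ x, coeff (νν 1) (C i x • g x) = ∑ j, C i j * A j 1 :=
      Finset.sum_congr rfl fun j _ => by rw [coeff_smul, hgco j, smul_eq_mul]
    exact h2.symm.trans hc.symm
  -- the syzygy transferred to g
  have hv'syz : ∑ j, (∑ i, C i j • vv (K := K) i) * g j = 0 := by
    calc ∑ j, (∑ i, C i j • vv (K := K) i) * g j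
        = ∑ j, ∑ i, (C i j • vv (K := K) i) * g j :=
          Finset.sum_congr rfl fun j _ => Finset.sum_mul _ _ _
      _ = ∑ i, ∑ j, (C i j • vv (K := K) i) * g j := Finset.sum_comm
      _ = ∑ i, vv (K := K) i * ∑ j, C i j • g j := by
          refine Finset.sum_congr rfl fun i _ => ?_
          rw [Finset.mul_sum]
          refine Finset.sum_congr rfl fun j _ => ?_
          rw [smul_mul_assoc, mul_smul_comm]
      _ = ∑ i, vv (K := K) i * nn i := by
          refine Finset.sum_congr rfl fun i _ => ?_
          rw [← hC i]
      _ = 0 := hv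
  obtain ⟨w, hw⟩ := (hres0 _).1 hv'syz
  -- columns of M 0 are syzygies of g
  have hcol : ∀ k, ∑ j, M 0 j k * g j = 0 := by
    intro k
    refine (hres0 _).2 ⟨Pi.single k 1, ?_⟩
    funext j
    rw [Finset.sum_eq_single k]
    · rw [Pi.single_eq_same, mul_one]
    · intro k' _ hne; rw [Pi.single_eq_of_ne hne, mul_zero]
    · intro h; exact absurd (Finset.mem_univ _) h
  -- transferred linear syzygies of nn
  have hγsyz : ∀ k, ∑ i, (∑ j, A j i • M 0 j k) * nn (K := K) i = 0 := by
    intro k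
    calc ∑ i, (∑ j, A j i • M 0 j k) * nn (K := K) i
        = ∑ i, ∑ j, (A j i • M 0 j k) * nn (K := K) i :=
          Finset.sum_congr rfl fun i _ => Finset.sum_mul _ _ _
      _ = ∑ j, ∑ i, (A j i • M 0 j k) * nn (K := K) i := Finset.sum_comm
      _ = ∑ j, M 0 j k * ∑ i, A j i • nn (K := K) i := by
          refine Finset.sum_congr rfl fun j _ => ?_
          rw [Finset.mul_sum]
          refine Finset.sum_congr rfl fun i _ => ?_
          rw [smul_mul_assoc, mul_smul_comm]
      _ = ∑ j, M 0 j k * g j := by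
          refine Finset.sum_congr rfl fun j _ => ?_
          rw [← hA j]
      _ = 0 := hcol k
  have hγθ : ∀ k, coeff (single 3 1) (∑ j, A j 1 • M 0 j k) = 0 := by
    intro k
    have ht := theta_eq (K := K) (fun i => ∑ j, A j i • M 0 j k)
    rw [hγsyz k] at ht
    simpa using ht.symm
  have hγhom : ∀ k, (∑ j, A j 1 • M 0 j k).IsHomogeneous 1 := by
    intro k
    exact IsHomogeneous.sum _ _ _ fun j _ => homog_smul _ (hM 0 j k)
  -- the polynomial q := ∑ j, A j 1 • v' j, computed two ways
  have key1 : ∑ j, A j 1 • (∑ i, C i j • vv (K := K) i) = vv (K := K) 1 := by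
    calc ∑ j, A j 1 • (∑ i, C i j • vv (K := K) i)
        = ∑ j, ∑ i, A j 1 • (C i j • vv (K := K) i) :=
          Finset.sum_congr rfl fun j _ => Finset.smul_sum
      _ = ∑ i, ∑ j, A j 1 • (C i j • vv (K := K) i) := Finset.sum_comm
      _ = ∑ i, (∑ j, C i j * A j 1) • vv (K := K) i := by
          refine Finset.sum_congr rfl fun i _ => ?_
          rw [Finset.sum_smul]
          refine Finset.sum_congr rfl fun j _ => ?_
          rw [smul_smul, mul_comm]
      _ = ∑ i, (if i = 1 then (1 : K) else 0) • vv (K := K) i := by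
          refine Finset.sum_congr rfl fun i _ => ?_
          rw [hCA1 i]
      _ = vv (K := K) 1 := by
          rw [Finset.sum_eq_single (1 : Fin 8)]
          · rw [if_pos rfl, one_smul]
          · intro i _ hne; rw [if_neg hne, zero_smul]
          · intro h; exact absurd (Finset.mem_univ _) h
  have key2 : ∑ j, A j 1 • (∑ i, C i j • vv (K := K) i)
      = ∑ k, (∑ j, A j 1 • M 0 j k) * w k := by
    calc ∑ j, A j 1 • (∑ i, C i j • vv (K := K) i)
        = ∑ j, A j 1 • (∑ k, M 0 j k * w k) := by
          refine Finset.sum_congr rfl fun j _ => ?_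
          rw [congrFun hw j]
      _ = ∑ j, ∑ k, A j 1 • (M 0 j k * w k) :=
          Finset.sum_congr rfl fun j _ => Finset.smul_sum
      _ = ∑ k, ∑ j, A j 1 • (M 0 j k * w k) := Finset.sum_comm
      _ = ∑ k, (∑ j, A j 1 • M 0 j k) * w k := by
          refine Finset.sum_congr rfl fun k _ => ?_
          rw [Finset.sum_mul]
          refine Finset.sum_congr rfl fun j _ => ?_
          rw [smul_mul_assoc]
  have hfin : coeff (single 3 2) (vv (K := K) 1) = 0 := by
    rw [← key1, key2, coeff_sum]
    refine Finset.sum_eq_zero fun k _ => ?_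
    rw [phi_mul (hγhom k), hγθ k, zero_mul]
  have hval : coeff (single 3 2) (vv (K := K) 1) = -1 := by
    simp [vv, X_pow_eq_monomial, coeff_monomial]
  rw [hval] at hfin
  exact one_ne_zero (neg_eq_zero.1 hfin)

end CHAux

/-- **Conca–Herzog example.** In `S = K[a,b,c,d]` (with `a = X 0`, `b = X 1`,
`c = X 2`, `d = X 3`), the ideal `I = (a²b, abc, bcd, cd²)` has linear quotients and
`I ⊆ P = (b, c)`, but `P·I` does not have a linear resolution. -/
theorem conca_herzog_example {K : Type*} [Field K]
    (I P : Ideal (MvPolynomial (Fin 4) K))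
    (hI : I = Ideal.span {X 0 ^ 2 * X 1, X 0 * X 1 * X 2, X 1 * X 2 * X 3, X 2 * X 3 ^ 2})
    (hP : P = Ideal.span {(X 1 : MvPolynomial (Fin 4) K), X 2}) :
    HasLinearQuotients I ∧ I ≤ P ∧ ¬ ∃ d : ℕ, HasLinearResolution (P * I) d := by
  refine ⟨CHAux.hlq I hI, ?_, CHAux.no_linres I P hI hP⟩
  rw [hI, hP]
  rw [Ideal.span_le]
  have hb : (X 1 : MvPolynomial (Fin 4) K) ∈ Ideal.span {(X 1 : MvPolynomial (Fin 4) K), X 2} :=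
    Ideal.subset_span (by simp)
  have hc : (X 2 : MvPolynomial (Fin 4) K) ∈ Ideal.span {(X 1 : MvPolynomial (Fin 4) K), X 2} :=
    Ideal.subset_span (by simp)
  rintro z hz
  simp only [Set.mem_insert_iff, Set.mem_singleton_iff] at hz
  rcases hz with rfl | rfl | rfl | rfl
  · exact Ideal.mul_mem_left _ _ hb
  · exact Ideal.mul_mem_left _ _ hc
  · rw [show (X 1 : MvPolynomial (Fin 4) K) * X 2 * X 3 = X 1 * X 3 * X 2 by ring]
    exact Ideal.mul_mem_left _ _ hc
  · rw [show (X 2 : MvPolynomial (Fin 4) K) * X 3 ^ 2 = X 3 ^ 2 * X 2 by ring]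
    exact Ideal.mul_mem_left _ _ hc
end
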